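/- arXiv:1011.2651 — 7 statements merged into one kernel-verified Lean document; each statement's English description precedes it below -/
import Mathlib

section
/- Let (X, ψ) be a weighted space and let 𝓑^ψ(X) denote the closure of the bounded continuous functions C_b(X) in B^ψ(X) with respect to ‖·‖_ψ. A function f : X → ℝ belongs to 𝓑^ψ(X) if and only if (i) the restriction f|_{K_R} is continuous for all R > 0, and (ii) lim_{R→∞} sup_{x ∈ X \ K_R} ψ(x)^{-1}|f(x)| = 0. -/
/-- `f` is a bounded continuous function. -/
def MemCb {X : Type*} [TopologicalSpace X] (g : X → ℝ) : Prop :=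
  Continuous g ∧ ∃ M : ℝ, ∀ x, |g x| ≤ M

/-- `f ∈ 𝓑^ψ(X)`: `f` lies in the `‖·‖_ψ`-closure of the bounded continuous functions. -/
def MemBpsi {X : Type*} [TopologicalSpace X] (ψ : X → ℝ) (f : X → ℝ) : Prop :=
  ∀ ε > (0 : ℝ), ∃ g : X → ℝ, MemCb g ∧ ∀ x, (ψ x)⁻¹ * |f x - g x| ≤ ε

/-!
On a sublevel set `K_R` the weight is at most `R`, so `‖·‖_ψ`-approximation by bounded continuous
functions is uniform there; and a bounded approximant `g` gives `ψ⁻¹ |f| ≤ ε + ψ⁻¹ sup |g|`.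

Conversely, truncating `f` at `M = sup_{K_R} |f|` changes it only off `K_R`, where it is already
`ψ`-small. The truncation `h` is bounded by `M`, and a Tietze extension of `h|_{K_{R'}}` with the
same bound (through the Stone–Čech compactification, in which `K_{R'}` embeds as a closed set)
differs from `h` by at most `2M ≤ ε ψ` off `K_{R'}` once `R' ≥ 2M/ε`.
-/

open Set Topology

section Clamp

variable {M t : ℝ}

theorem abs_max_neg_min_le (hM : 0 ≤ M) : |max (-M) (min M t)| ≤ M := by
  grind

theorem max_neg_min_eq_self (ht : |t| ≤ M) : max (-M) (min M t) = t := by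
  grind

theorem abs_sub_max_neg_min_le (hM : 0 ≤ M) : |t - max (-M) (min M t)| ≤ |t| := by
  grind

end Clamp

theorem IsCompact.exists_continuous_extension_abs_le {X : Type*} [TopologicalSpace X]
    [T35Space X] {K : Set X} (hK : IsCompact K) {f : X → ℝ} (hf : ContinuousOn f K) {M : ℝ}
    (hM₀ : 0 ≤ M) (hM : ∀ x ∈ K, |f x| ≤ M) :
    ∃ g : X → ℝ, Continuous g ∧ EqOn g f K ∧ ∀ x, |g x| ≤ M := by
  have : CompactSpace K := isCompact_iff_compactSpace.mp hK
  have he : IsClosedEmbedding (stoneCechUnit ∘ ((↑) : K → X)) :=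
    (continuous_stoneCechUnit.comp continuous_subtype_val).isClosedEmbedding
      (injective_stoneCechUnit_of_t35Space.comp Subtype.val_injective)
  obtain ⟨G, hG, hGf⟩ :=
    BoundedContinuousFunction.exists_extension_forall_mem_Icc_of_isClosedEmbedding
      (.mkOfCompact ⟨K.domRestrict f, hf.domRestrict⟩) (fun x ↦ abs_le.mp (hM x x.2))
      (by linarith) he
  exact ⟨G ∘ stoneCechUnit, G.continuous.comp continuous_stoneCechUnit,
    fun x hx ↦ congr_fun hGf ⟨x, hx⟩, fun x ↦ abs_le.mpr (hG _)⟩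

section Weighted

variable {X : Type*} [TopologicalSpace X] {ψ : X → ℝ} {f : X → ℝ}

theorem MemBpsi.continuousOn (hpos : ∀ x, 0 < ψ x) (hf : MemBpsi ψ f) {s : Set X} {R : ℝ}
    (hs : ∀ x ∈ s, ψ x ≤ R) : ContinuousOn f s := by
  refine continuousOn_of_uniform_approx_of_continuousOn fun u hu ↦ ?_
  obtain ⟨δ, hδ, hδu⟩ := Metric.mem_uniformity_dist.mp hu
  have hR : 0 < |R| + 1 := by positivity
  obtain ⟨g, ⟨hg, -⟩, hfg⟩ := hf (δ / (|R| + 1)) (div_pos hδ hR)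
  refine ⟨g, hg.continuousOn, fun x hx ↦ hδu ?_⟩
  have hfgx := (inv_mul_le_iff₀ (hpos x)).mp (hfg x)
  calc dist (f x) (g x) = |f x - g x| := Real.dist_eq _ _
    _ ≤ ψ x * (δ / (|R| + 1)) := hfgx
    _ ≤ |R| * (δ / (|R| + 1)) := by gcongr; exact (hs x hx).trans (le_abs_self R)
    _ < δ := by rw [mul_div_assoc', div_lt_iff₀ hR]; nlinarith

theorem MemBpsi.decay (hpos : ∀ x, 0 < ψ x) (hf : MemBpsi ψ f) :
    ∀ ε > (0 : ℝ), ∃ R : ℝ, ∀ x, R < ψ x → (ψ x)⁻¹ * |f x| ≤ ε := by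
  intro ε hε
  obtain ⟨g, ⟨-, M, hM⟩, hfg⟩ := hf (ε / 2) (half_pos hε)
  refine ⟨2 * M / ε, fun x hx ↦ ?_⟩
  have hgx : (ψ x)⁻¹ * |g x| ≤ ε / 2 := by
    rw [inv_mul_le_iff₀ (hpos x)]
    rw [div_lt_iff₀ hε] at hx
    linarith [hM x]
  have hψ : 0 ≤ (ψ x)⁻¹ := (inv_pos.mpr (hpos x)).le
  calc (ψ x)⁻¹ * |f x| ≤ (ψ x)⁻¹ * (|f x - g x| + |g x|) := by
        gcongr; linarith [abs_sub_abs_le_abs_sub (f x) (g x)]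
    _ = (ψ x)⁻¹ * |f x - g x| + (ψ x)⁻¹ * |g x| := mul_add _ _ _
    _ ≤ ε := by linarith [hfg x]

theorem memBpsi_of_forall_memBpsi_approx (hpos : ∀ x, 0 < ψ x)
    (hf : ∀ ε > (0 : ℝ), ∃ h, MemBpsi ψ h ∧ ∀ x, (ψ x)⁻¹ * |f x - h x| ≤ ε) :
    MemBpsi ψ f := by
  intro ε hε
  obtain ⟨h, hh, hfh⟩ := hf (ε / 2) (half_pos hε)
  obtain ⟨g, hg, hhg⟩ := hh (ε / 2) (half_pos hε)
  refine ⟨g, hg, fun x ↦ ?_⟩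
  have hψ : 0 ≤ (ψ x)⁻¹ := (inv_pos.mpr (hpos x)).le
  calc (ψ x)⁻¹ * |f x - g x| ≤ (ψ x)⁻¹ * (|f x - h x| + |h x - g x|) := by
        gcongr; exact abs_sub_le _ _ _
    _ = (ψ x)⁻¹ * |f x - h x| + (ψ x)⁻¹ * |h x - g x| := mul_add _ _ _
    _ ≤ ε := by linarith [hfh x, hhg x]

theorem memBpsi_of_abs_le [T35Space X] (hcomp : ∀ R > (0 : ℝ), IsCompact {x : X | ψ x ≤ R})
    (hf : ∀ R > (0 : ℝ), ContinuousOn f {x : X | ψ x ≤ R}) {M : ℝ} (hM : ∀ x, |f x| ≤ M) :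
    MemBpsi ψ f := by
  intro ε hε
  set R := 2 * |M| / ε + 1
  have hR : 0 < R := by positivity
  obtain ⟨g, hg, hgf, hgM⟩ := (hcomp R hR).exists_continuous_extension_abs_le (hf R hR)
    (abs_nonneg M) fun x _ ↦ (hM x).trans (le_abs_self M)
  refine ⟨g, ⟨hg, |M|, hgM⟩, fun x ↦ ?_⟩
  rcases le_or_gt (ψ x) R with hx | hx
  · simp [hgf hx, hε.le]
  · have hψ : 0 < ψ x := hR.trans hx
    rw [inv_mul_le_iff₀ hψ]
    have h2M : 2 * |M| < ψ x * ε := by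
      rw [← div_lt_iff₀ hε]; linarith
    linarith [abs_sub (f x) (g x), (hM x).trans (le_abs_self M), hgM x]

theorem exists_abs_le_approx_of_continuousOn_of_decay
    (hcomp : ∀ R > (0 : ℝ), IsCompact {x : X | ψ x ≤ R})
    (hf : ∀ R > (0 : ℝ), ContinuousOn f {x : X | ψ x ≤ R})
    (hdecay : ∀ ε > (0 : ℝ), ∃ R : ℝ, ∀ x, R < ψ x → (ψ x)⁻¹ * |f x| ≤ ε)
    {ε : ℝ} (hε : 0 < ε) :
    ∃ h : X → ℝ, (∃ M, ∀ x, |h x| ≤ M) ∧ (∀ R > (0 : ℝ), ContinuousOn h {x : X | ψ x ≤ R}) ∧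
      ∀ x, (ψ x)⁻¹ * |f x - h x| ≤ ε := by
  obtain ⟨R₀, hR₀⟩ := hdecay ε hε
  set R := max R₀ 1
  have hR : 0 < R := lt_max_of_lt_right one_pos
  obtain ⟨M, hM⟩ := (hcomp R hR).exists_bound_of_continuousOn (hf R hR)
  set M' := max M 0
  have hclamp : Continuous fun t : ℝ ↦ max (-M') (min M' t) :=
    continuous_const.max (continuous_const.min continuous_id)
  refine ⟨fun x ↦ max (-M') (min M' (f x)), ⟨M', fun x ↦ abs_max_neg_min_le (le_max_right _ _)⟩,
    fun R' hR' ↦ hclamp.comp_continuousOn (hf R' hR'), fun x ↦ ?_⟩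
  rcases le_or_gt (ψ x) R with hx | hx
  · have hfx : |f x| ≤ M' := (hM x hx).trans (le_max_left _ _)
    simp [max_neg_min_eq_self hfx, hε.le]
  · have hψ : 0 ≤ (ψ x)⁻¹ := (inv_pos.mpr (hR.trans hx)).le
    calc (ψ x)⁻¹ * |f x - max (-M') (min M' (f x))| ≤ (ψ x)⁻¹ * |f x| :=
          mul_le_mul_of_nonneg_left (abs_sub_max_neg_min_le (le_max_right _ _)) hψ
      _ ≤ ε := hR₀ x ((le_max_left _ _).trans_lt hx)

end Weighted

/-- `f ∈ 𝓑^ψ(X)` iff `f` restricted to each sublevel set `K_R` is continuous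
and `sup_{x ∉ K_R} ψ(x)⁻¹ |f x| → 0` as `R → ∞`. -/
theorem memBpsi_iff_continuousOn_and_decay
    {X : Type*} [TopologicalSpace X] [T2Space X] [CompletelyRegularSpace X]
    (ψ : X → ℝ) (hpos : ∀ x, 0 < ψ x)
    (hcomp : ∀ R > (0 : ℝ), IsCompact {x : X | ψ x ≤ R})
    (f : X → ℝ) :
    MemBpsi ψ f ↔
      (∀ R > (0 : ℝ), ContinuousOn f {x : X | ψ x ≤ R}) ∧
      (∀ ε > (0 : ℝ), ∃ R : ℝ, ∀ x, R < ψ x → (ψ x)⁻¹ * |f x| ≤ ε) := by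
  have : T35Space X := {}
  refine ⟨fun hf ↦ ⟨fun R _ ↦ hf.continuousOn hpos fun _ hx ↦ hx, hf.decay hpos⟩, ?_⟩
  rintro ⟨hcont, hdecay⟩
  refine memBpsi_of_forall_memBpsi_approx hpos fun ε hε ↦ ?_
  obtain ⟨h, ⟨M, hM⟩, hh, hfh⟩ :=
    exists_abs_le_approx_of_continuousOn_of_decay hcomp hcont hdecay hε
  exact ⟨h, memBpsi_of_abs_le hcomp hh hM, hfh⟩
end

section
/- Let (X, ψ) be a weighted space and f ∈ 𝓑^ψ(X) with sup_{x∈X} f(x) > 0. Then there exists z ∈ X such that ψ(x)^{-1} f(x) ≤ ψ(z)^{-1} f(z) for all x ∈ X, i.e., the function ψ^{-1} f attains its supremum. -/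
theorem lowerSemicontinuous_of_isClosed_sublevel_of_pos {X : Type*} [TopologicalSpace X]
    {ψ : X → ℝ} (hpos : ∀ x, 0 < ψ x) (hclosed : ∀ R > (0 : ℝ), IsClosed {x | ψ x ≤ R}) :
    LowerSemicontinuous ψ := by
  refine lowerSemicontinuous_iff_isClosed_preimage.2 fun R => ?_
  rcases le_or_gt R 0 with hR | hR
  · convert isClosed_empty
    exact Set.eq_empty_of_forall_notMem fun x hx => (hx.trans hR).not_gt (hpos x)
  · exact hclosed R hR

theorem UpperSemicontinuousOn.inv_mul {X : Type*} [TopologicalSpace X] {s : Set X}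
    {u v : X → ℝ} (hu : UpperSemicontinuousOn u s) (hu₀ : ∀ x ∈ s, 0 ≤ u x)
    (hv : LowerSemicontinuousOn v s) (hv₀ : ∀ x ∈ s, 0 < v x) :
    UpperSemicontinuousOn (fun x => (v x)⁻¹ * u x) s := by
  intro x hx t ht
  have ht₀ : 0 < t := (mul_nonneg (inv_pos.2 (hv₀ x hx)).le (hu₀ x hx)).trans_lt ht
  rw [inv_mul_lt_iff₀ (hv₀ x hx)] at ht
  obtain ⟨r, hur, hrv⟩ := exists_between ht
  have hrv' : r / t < v x := by rwa [div_lt_iff₀ ht₀]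
  filter_upwards [hu x hx r hur, hv x hx _ hrv', self_mem_nhdsWithin] with y hyu hyv hys
  rw [inv_mul_lt_iff₀ (hv₀ y hys)]
  linarith [(div_lt_iff₀ ht₀).1 hyv]

namespace MemBpsi

variable {X : Type*} [TopologicalSpace X] {ψ f : X → ℝ}

theorem continuousOn_of_le (hpos : ∀ x, 0 < ψ x) (hf : MemBpsi ψ f) {s : Set X} {R : ℝ}
    (hR : ∀ x ∈ s, ψ x ≤ R) : ContinuousOn f s := by
  refine continuousOn_of_uniform_approx_of_continuousOn fun u hu => ?_
  obtain ⟨ε, hε, hεu⟩ := Metric.mem_uniformity_dist.1 hu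
  obtain ⟨g, ⟨hg, -⟩, hfg⟩ := hf (ε / (|R| + 1)) (by positivity)
  refine ⟨g, hg.continuousOn, fun x hx => hεu ?_⟩
  have hfgx := hfg x
  rw [inv_mul_le_iff₀ (hpos x)] at hfgx
  calc dist (f x) (g x) = |f x - g x| := Real.dist_eq _ _
    _ ≤ ψ x * (ε / (|R| + 1)) := hfgx
    _ ≤ |R| * (ε / (|R| + 1)) := by gcongr; exact (hR x hx).trans (le_abs_self R)
    _ < ε := by rw [mul_div_assoc', div_lt_iff₀ (by positivity)]; nlinarith

theorem exists_weighted_abs_le (hpos : ∀ x, 0 < ψ x) (hf : MemBpsi ψ f) {ε : ℝ} (hε : 0 < ε) :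
    ∃ R, ∀ x, R < ψ x → (ψ x)⁻¹ * |f x| ≤ ε := by
  obtain ⟨g, ⟨-, M, hgM⟩, hfg⟩ := hf (ε / 2) (by positivity)
  refine ⟨2 * M / ε, fun x hx => ?_⟩
  have hgx : (ψ x)⁻¹ * |g x| ≤ ε / 2 := by
    rw [div_lt_iff₀ hε] at hx
    rw [inv_mul_le_iff₀ (hpos x)]
    linarith [hgM x]
  calc (ψ x)⁻¹ * |f x| ≤ (ψ x)⁻¹ * (|f x - g x| + |g x|) :=
        mul_le_mul_of_nonneg_left (by linarith [abs_sub_abs_le_abs_sub (f x) (g x)])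
          (inv_pos.2 (hpos x)).le
    _ = (ψ x)⁻¹ * |f x - g x| + (ψ x)⁻¹ * |g x| := mul_add _ _ _
    _ ≤ ε := by linarith [hfg x]

end MemBpsi

theorem memBpsi_attains_weighted_max_general
    {X : Type*} [TopologicalSpace X] [T2Space X]
    (ψ : X → ℝ) (hpos : ∀ x, 0 < ψ x)
    (hcomp : ∀ R > (0 : ℝ), IsCompact {x : X | ψ x ≤ R})
    (f : X → ℝ) (hf : MemBpsi ψ f) (hsup : ∃ x, 0 < f x) :
    ∃ z : X, ∀ x, (ψ x)⁻¹ * f x ≤ (ψ z)⁻¹ * f z := by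
  obtain ⟨x₀, hx₀⟩ := hsup
  set c := (ψ x₀)⁻¹ * f x₀
  have hc : 0 < c := mul_pos (inv_pos.2 (hpos x₀)) hx₀
  obtain ⟨R, hR⟩ := hf.exists_weighted_abs_le hpos (half_pos hc)
  set K := {x | ψ x ≤ max R (ψ x₀)}
  have hK : IsCompact K := hcomp _ ((hpos x₀).trans_le (le_max_right _ _))
  have hx₀K : x₀ ∈ K := show ψ x₀ ≤ _ from le_max_right _ _
  have hfK : ContinuousOn f K := hf.continuousOn_of_le hpos fun _ hx => hx
  have hψ : LowerSemicontinuous ψ :=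
    lowerSemicontinuous_of_isClosed_sublevel_of_pos hpos fun R hR => (hcomp R hR).isClosed
  -- `ψ⁻¹ f` itself need not be upper semicontinuous where `f < 0`, so maximise `ψ⁻¹ f⁺`.
  have husc : UpperSemicontinuousOn (fun x => (ψ x)⁻¹ * max (f x) 0) K :=
    (hfK.sup continuousOn_const).upperSemicontinuousOn.inv_mul (fun _ _ => le_max_right _ _)
      (hψ.lowerSemicontinuousOn K) fun x _ => hpos x
  obtain ⟨z, -, hz⟩ := husc.exists_isMaxOn ⟨x₀, hx₀K⟩ hK
  have hcz : c ≤ (ψ z)⁻¹ * max (f z) 0 := by simpa [max_eq_left hx₀.le] using hz hx₀K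
  have hfz : max (f z) 0 = f z := max_eq_left (by
    by_contra! h
    rw [max_eq_right h.le, mul_zero] at hcz
    linarith)
  rw [hfz] at hcz
  refine ⟨z, fun x => ?_⟩
  by_cases hxK : x ∈ K
  · calc (ψ x)⁻¹ * f x ≤ (ψ x)⁻¹ * max (f x) 0 :=
          mul_le_mul_of_nonneg_left (le_max_left _ _) (inv_pos.2 (hpos x)).le
      _ ≤ (ψ z)⁻¹ * f z := hfz ▸ hz hxK
  · have hx_abs := hR x ((le_max_left _ _).trans_lt (not_le.1 hxK))
    have hx_le_abs := mul_le_mul_of_nonneg_left (le_abs_self (f x)) (inv_pos.2 (hpos x)).le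
    linarith

/-- If `f ∈ 𝓑^ψ(X)` has positive supremum, then `ψ⁻¹ f` attains its
supremum at some `z ∈ X`. -/
theorem memBpsi_attains_weighted_max
    {X : Type*} [TopologicalSpace X] [T2Space X] [CompletelyRegularSpace X]
    (ψ : X → ℝ) (hpos : ∀ x, 0 < ψ x)
    (hcomp : ∀ R > (0 : ℝ), IsCompact {x : X | ψ x ≤ R})
    (f : X → ℝ) (hf : MemBpsi ψ f) (hsup : ∃ x, 0 < f x) :
    ∃ z : X, ∀ x, (ψ x)⁻¹ * f x ≤ (ψ z)⁻¹ * f z :=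
  memBpsi_attains_weighted_max_general ψ hpos hcomp f hf hsup
end

section
/- Let A be the generator of a generalised Feller semigroup (P_t)_{t≥0} on 𝓑^ψ(X) satisfying ‖P_t‖ ≤ exp(ωt) for all t ≥ 0. Then A satisfies the generalised positive maximum principle: for f in the domain of A with (ψ^{-1}f) ∨ 0 ≤ ψ(z)^{-1} f(z) for some z ∈ X, one has Af(z) ≤ ω f(z). -/
/-!
Compare `f` with its positive part `f⁺ = f ∨ 0`. Positivity gives `P_t f(z) ≤ P_t f⁺(z)`, and
the hypothesis at `z` says exactly that `‖f⁺‖_ψ ≤ ψ(z)⁻¹ f(z)`, so the growth bound yields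
`P_t f(z) ≤ ψ(z) ‖P_t f⁺‖_ψ ≤ e^{ωt} f(z)`. Dividing `P_t f(z) - f(z) ≤ (e^{ωt} - 1) f(z)` by `t`
and letting `t → 0+` gives `Af(z) ≤ ω f(z)`, since convergence in `‖·‖_ψ` implies pointwise
convergence. For the latter, `ψ` must be bounded away from `0`, which follows from the compactness
of its sublevel sets.
-/

open Filter Topology

/-- The weighted sup-norm `‖f‖_ψ = sup_x ψ(x)⁻¹ |f x|`. -/
noncomputable def normPsi {X : Type*} (ψ : X → ℝ) (f : X → ℝ) : ℝ :=
  ⨆ x, (ψ x)⁻¹ * |f x|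

/-- The weight is bounded below because `⋂ₙ {ψ ≤ 1/(n+1)} = ∅` is a nested intersection of
nonempty compact sets otherwise. -/
theorem exists_pos_le_of_isCompact_sublevel {X : Type*} [TopologicalSpace X] [T2Space X]
    {ψ : X → ℝ} (hpos : ∀ x, 0 < ψ x) (hcomp : ∀ R > (0 : ℝ), IsCompact {x : X | ψ x ≤ R}) :
    ∃ δ > (0 : ℝ), ∀ x, δ ≤ ψ x := by
  by_contra! h
  let S : ℕ → Set X := fun n => {x | ψ x ≤ 1 / (n + 1)}
  have hS : ∀ n, IsCompact (S n) := fun n => hcomp _ (by positivity)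
  obtain ⟨x, hx⟩ := IsCompact.nonempty_iInter_of_sequence_nonempty_isCompact_isClosed S
    (fun n x (hx : ψ x ≤ _) => hx.trans (Nat.one_div_le_one_div n.le_succ))
    (fun n => (h _ (by positivity)).imp fun _ => le_of_lt) (hS 0) (fun n => (hS n).isClosed)
  obtain ⟨n, hn⟩ := exists_nat_one_div_lt (hpos x)
  exact (Set.mem_iInter.1 hx n).not_gt hn

theorem abs_le_mul_normPsi {X : Type*} {ψ : X → ℝ} (hpos : ∀ x, 0 < ψ x) {f : X → ℝ}
    (hf : BddAbove (Set.range fun x => (ψ x)⁻¹ * |f x|)) (x : X) :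
    |f x| ≤ ψ x * normPsi ψ f :=
  (inv_mul_le_iff₀ (hpos x)).1 (le_ciSup hf x)

section WeightedSpace

variable {X : Type*} [TopologicalSpace X] {ψ : X → ℝ}

theorem MemBpsi.sub (hpos : ∀ x, 0 < ψ x) {f₁ f₂ : X → ℝ} (h₁ : MemBpsi ψ f₁)
    (h₂ : MemBpsi ψ f₂) : MemBpsi ψ (fun x => f₁ x - f₂ x) := by
  intro ε hε
  obtain ⟨g₁, ⟨hc₁, M₁, hM₁⟩, hg₁⟩ := h₁ (ε / 2) (by positivity)
  obtain ⟨g₂, ⟨hc₂, M₂, hM₂⟩, hg₂⟩ := h₂ (ε / 2) (by positivity)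
  refine ⟨fun x => g₁ x - g₂ x, ⟨hc₁.sub hc₂, M₁ + M₂, fun x => ?_⟩, fun x => ?_⟩
  · exact (abs_sub _ _).trans (add_le_add (hM₁ x) (hM₂ x))
  · have hψ : 0 ≤ (ψ x)⁻¹ := inv_nonneg.2 (hpos x).le
    calc (ψ x)⁻¹ * |f₁ x - f₂ x - (g₁ x - g₂ x)|
        ≤ (ψ x)⁻¹ * (|f₁ x - g₁ x| + |f₂ x - g₂ x|) := by
          rw [sub_sub_sub_comm]; exact mul_le_mul_of_nonneg_left (abs_sub _ _) hψ
      _ ≤ ε / 2 + ε / 2 := by rw [mul_add]; exact add_le_add (hg₁ x) (hg₂ x)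
      _ = ε := add_halves ε

theorem MemBpsi.const_mul (hpos : ∀ x, 0 < ψ x) (c : ℝ) {f : X → ℝ} (h : MemBpsi ψ f) :
    MemBpsi ψ (fun x => c * f x) := by
  intro ε hε
  have hc : 0 < |c| + 1 := by positivity
  obtain ⟨g, ⟨hg, M, hM⟩, hfg⟩ := h (ε / (|c| + 1)) (by positivity)
  refine ⟨fun x => c * g x, ⟨hg.const_smul c, |c| * M, fun x => ?_⟩, fun x => ?_⟩
  · rw [abs_mul]; exact mul_le_mul_of_nonneg_left (hM x) (abs_nonneg c)
  · calc (ψ x)⁻¹ * |c * f x - c * g x| = |c| * ((ψ x)⁻¹ * |f x - g x|) := by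
          rw [← mul_sub, abs_mul]; ring
      _ ≤ (|c| + 1) * (ε / (|c| + 1)) :=
          mul_le_mul (by linarith) (hfg x) (mul_nonneg (inv_nonneg.2 (hpos x).le) (abs_nonneg _))
            hc.le
      _ = ε := mul_div_cancel₀ ε hc.ne'

theorem MemBpsi.max_zero (hpos : ∀ x, 0 < ψ x) {f : X → ℝ} (h : MemBpsi ψ f) :
    MemBpsi ψ (fun x => max (f x) 0) := by
  intro ε hε
  obtain ⟨g, ⟨hg, M, hM⟩, hfg⟩ := h ε hε
  refine ⟨fun x => max (g x) 0, ⟨hg.max continuous_const, M, fun x => ?_⟩, fun x => ?_⟩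
  · rw [abs_of_nonneg (le_max_right _ _)]
    exact max_le ((le_abs_self _).trans (hM x)) ((abs_nonneg _).trans (hM x))
  · exact (mul_le_mul_of_nonneg_left (abs_max_sub_max_le_abs _ _ _)
      (inv_nonneg.2 (hpos x).le)).trans (hfg x)

theorem MemBpsi.bddAbove_range {δ : ℝ} (hδ : 0 < δ) (hδψ : ∀ x, δ ≤ ψ x) {f : X → ℝ}
    (h : MemBpsi ψ f) : BddAbove (Set.range fun x => (ψ x)⁻¹ * |f x|) := by
  obtain ⟨g, ⟨-, M, hM⟩, hfg⟩ := h 1 one_pos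
  refine ⟨1 + δ⁻¹ * M, ?_⟩
  rintro _ ⟨x, rfl⟩
  have hψ : 0 ≤ (ψ x)⁻¹ := inv_nonneg.2 (hδ.trans_le (hδψ x)).le
  calc (ψ x)⁻¹ * |f x| ≤ (ψ x)⁻¹ * |f x - g x| + (ψ x)⁻¹ * |g x| := by
        rw [← mul_add]
        exact mul_le_mul_of_nonneg_left (sub_le_iff_le_add.1 (abs_sub_abs_le_abs_sub _ _)) hψ
    _ ≤ 1 + δ⁻¹ * M :=
        add_le_add (hfg x) (mul_le_mul (inv_anti₀ hδ (hδψ x)) (hM x) (abs_nonneg _)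
          (inv_nonneg.2 hδ.le))

theorem tendsto_apply_of_tendsto_normPsi {δ : ℝ} (hδ : 0 < δ) (hδψ : ∀ x, δ ≤ ψ x)
    {ι : Type*} {l : Filter ι} {F : ι → X → ℝ} (hF : ∀ᶠ i in l, MemBpsi ψ (F i))
    (hlim : Tendsto (fun i => normPsi ψ (F i)) l (𝓝 0)) (z : X) :
    Tendsto (fun i => F i z) l (𝓝 0) := by
  have hpos : ∀ x, 0 < ψ x := fun x => hδ.trans_le (hδψ x)
  refine squeeze_zero_norm' ?_ (by simpa using hlim.const_mul (ψ z))
  filter_upwards [hF] with i hi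
  exact abs_le_mul_normPsi hpos (hi.bddAbove_range hδ hδψ) z

theorem apply_le_mul_of_max_le {δ : ℝ} (hδ : 0 < δ) (hδψ : ∀ x, δ ≤ ψ x)
    (T : (X → ℝ) →ₗ[ℝ] (X → ℝ)) {c : ℝ} (hc : 0 ≤ c)
    (hTmem : ∀ h, MemBpsi ψ h → MemBpsi ψ (T h))
    (hTpos : ∀ h, MemBpsi ψ h → (∀ x, 0 ≤ h x) → ∀ x, 0 ≤ T h x)
    (hTnorm : ∀ h, MemBpsi ψ h → normPsi ψ (T h) ≤ c * normPsi ψ h)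
    {f : X → ℝ} (hf : MemBpsi ψ f) {z : X}
    (hmax : ∀ x, max ((ψ x)⁻¹ * f x) 0 ≤ (ψ z)⁻¹ * f z) :
    T f z ≤ c * f z := by
  have hpos : ∀ x, 0 < ψ x := fun x => hδ.trans_le (hδψ x)
  set fp : X → ℝ := fun x => max (f x) 0
  have hfp : MemBpsi ψ fp := hf.max_zero hpos
  have hTf_le : T f z ≤ T fp z := by
    have := hTpos (fp - f) (hfp.sub hpos hf) (fun x => sub_nonneg.2 (le_max_left _ _)) z
    rwa [map_sub, Pi.sub_apply, sub_nonneg] at this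
  have hnorm_fp : normPsi ψ fp ≤ (ψ z)⁻¹ * f z := by
    refine Real.iSup_le (fun x => ?_) ((le_max_right _ _).trans (hmax z))
    rw [abs_of_nonneg (le_max_right _ _), mul_max_of_nonneg _ _ (inv_nonneg.2 (hpos x).le),
      mul_zero]
    exact hmax x
  calc T f z ≤ |T fp z| := hTf_le.trans (le_abs_self _)
    _ ≤ ψ z * normPsi ψ (T fp) :=
        abs_le_mul_normPsi hpos ((hTmem fp hfp).bddAbove_range hδ hδψ) z
    _ ≤ ψ z * (c * ((ψ z)⁻¹ * f z)) :=
        mul_le_mul_of_nonneg_left ((hTnorm fp hfp).trans (mul_le_mul_of_nonneg_left hnorm_fp hc))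
          (hpos z).le
    _ = c * f z := by rw [mul_left_comm, mul_inv_cancel_left₀ (hpos z).ne']

end WeightedSpace

theorem tendsto_inv_mul_exp_mul_sub_one (ω : ℝ) :
    Tendsto (fun t : ℝ => t⁻¹ * (Real.exp (ω * t) - 1)) (𝓝[>] 0) (𝓝 ω) := by
  have h : HasDerivAt (fun t => Real.exp (ω * t)) ω 0 := by
    simpa using ((hasDerivAt_id (0 : ℝ)).const_mul ω).exp
  simpa using h.tendsto_slope_zero_right

theorem generator_generalised_positive_maximum_principle_general
    {X : Type*} [TopologicalSpace X] [T2Space X]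
    (ψ : X → ℝ) (hpos : ∀ x, 0 < ψ x)
    (hcomp : ∀ R > (0 : ℝ), IsCompact {x : X | ψ x ≤ R})
    (ω : ℝ)
    (P : ℝ → (X → ℝ) →ₗ[ℝ] (X → ℝ))
    (hinv : ∀ t ≥ (0 : ℝ), ∀ f : X → ℝ, MemBpsi ψ f → MemBpsi ψ (P t f))
    (hpositive : ∀ t ≥ (0 : ℝ), ∀ f : X → ℝ, MemBpsi ψ f → (∀ x, 0 ≤ f x) →
      ∀ x, 0 ≤ P t f x)
    (hbdd : ∀ t ≥ (0 : ℝ), ∀ f : X → ℝ, MemBpsi ψ f →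
      normPsi ψ (P t f) ≤ Real.exp (ω * t) * normPsi ψ f)
    -- `f ∈ dom A` with `A f = g`:
    (f g : X → ℝ) (hf : MemBpsi ψ f) (hg : MemBpsi ψ g)
    (hgen : Tendsto (fun t => normPsi ψ (fun x => t⁻¹ * (P t f x - f x) - g x))
      (𝓝[>] (0 : ℝ)) (𝓝 0))
    (z : X) (hmax : ∀ x, max ((ψ x)⁻¹ * f x) 0 ≤ (ψ z)⁻¹ * f z) :
    g z ≤ ω * f z := by
  obtain ⟨δ, hδ, hδψ⟩ := exists_pos_le_of_isCompact_sublevel hpos hcomp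
  have hquot : Tendsto (fun t => t⁻¹ * (P t f z - f z)) (𝓝[>] 0) (𝓝 (g z)) := by
    have hmem : ∀ᶠ t in 𝓝[>] (0 : ℝ),
        MemBpsi ψ (fun x => t⁻¹ * (P t f x - f x) - g x) := by
      filter_upwards [self_mem_nhdsWithin] with t (ht : 0 < t)
      exact (((hinv t ht.le f hf).sub hpos hf).const_mul hpos t⁻¹).sub hpos hg
    simpa using (tendsto_apply_of_tendsto_normPsi hδ hδψ hmem hgen z).add_const (g z)
  refine le_of_tendsto_of_tendsto hquot ((tendsto_inv_mul_exp_mul_sub_one ω).mul_const (f z)) ?_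
  filter_upwards [self_mem_nhdsWithin] with t (ht : 0 < t)
  have hPt := apply_le_mul_of_max_le hδ hδψ (P t) (Real.exp_nonneg _) (hinv t ht.le)
    (hpositive t ht.le) (hbdd t ht.le) hf hmax
  rw [mul_assoc]
  exact mul_le_mul_of_nonneg_left (by linarith) (inv_nonneg.2 ht.le)

/-- If `A` generates a generalised Feller semigroup `(P_t)` on `𝓑^ψ(X)` with
`‖P_t‖ ≤ exp(ω t)`, then `A` satisfies the generalised positive maximum principle: if
`f ∈ dom A` and `(ψ⁻¹ f) ∨ 0 ≤ ψ(z)⁻¹ f(z)` for some `z ∈ X`, then `A f(z) ≤ ω f(z)`. -/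
theorem generator_generalised_positive_maximum_principle
    {X : Type*} [TopologicalSpace X] [T2Space X] [CompletelyRegularSpace X] [Nonempty X]
    (ψ : X → ℝ) (hpos : ∀ x, 0 < ψ x)
    (hcomp : ∀ R > (0 : ℝ), IsCompact {x : X | ψ x ≤ R})
    (ω : ℝ)
    (P : ℝ → (X → ℝ) →ₗ[ℝ] (X → ℝ))
    (hinv : ∀ t ≥ (0 : ℝ), ∀ f : X → ℝ, MemBpsi ψ f → MemBpsi ψ (P t f))
    (hP0 : ∀ f : X → ℝ, MemBpsi ψ f → P 0 f = f)
    (hsemi : ∀ s ≥ (0 : ℝ), ∀ t ≥ (0 : ℝ), ∀ f : X → ℝ, MemBpsi ψ f →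
      P (s + t) f = P s (P t f))
    (hpw : ∀ f : X → ℝ, MemBpsi ψ f → ∀ x : X,
      Tendsto (fun t => P t f x) (𝓝[>] (0 : ℝ)) (𝓝 (f x)))
    (hpositive : ∀ t ≥ (0 : ℝ), ∀ f : X → ℝ, MemBpsi ψ f → (∀ x, 0 ≤ f x) →
      ∀ x, 0 ≤ P t f x)
    (hbdd : ∀ t ≥ (0 : ℝ), ∀ f : X → ℝ, MemBpsi ψ f →
      normPsi ψ (P t f) ≤ Real.exp (ω * t) * normPsi ψ f)
    -- `f ∈ dom A` with `A f = g`: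
    (f g : X → ℝ) (hf : MemBpsi ψ f) (hg : MemBpsi ψ g)
    (hgen : Tendsto (fun t => normPsi ψ (fun x => t⁻¹ * (P t f x - f x) - g x))
      (𝓝[>] (0 : ℝ)) (𝓝 0))
    (z : X) (hmax : ∀ x, max ((ψ x)⁻¹ * f x) 0 ≤ (ψ z)⁻¹ * f z) :
    g z ≤ ω * f z :=
  generator_generalised_positive_maximum_principle_general ψ hpos hcomp ω P hinv hpositive hbdd f g
    hf hg hgen z hmax
end

section
/- Let Y be a Banach space, X = Y* with the weak-* topology, and ψ an admissible weight function on X_{w*}. Let 𝒜 be the algebra of bounded smooth cylinder functions x ↦ g(⟨x,y_1⟩,…,⟨x,y_N⟩) with g ∈ C_b^∞(ℝ^N) and y_1,…,y_N ∈ Y. Then 𝒜 is dense in 𝓑^ψ(X_{w*}) with respect to the weighted sup norm ‖·‖_ψ. -/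
/-- A bounded smooth cylinder function on `X = Y*`:
`x ↦ g(⟨x,y₁⟩, …, ⟨x,y_N⟩)` with `g ∈ C_b^∞(ℝ^N)` and `y₁,…,y_N ∈ Y`. -/
def IsSmoothCylinder {Y : Type*} [NormedAddCommGroup Y] [NormedSpace ℝ Y]
    (f : WeakDual ℝ Y → ℝ) : Prop :=
  ∃ (N : ℕ) (g : (Fin N → ℝ) → ℝ) (y : Fin N → Y),
    ContDiff ℝ (⊤ : ℕ∞) g ∧ (∃ M : ℝ, ∀ v, |g v| ≤ M) ∧
    ∀ x : WeakDual ℝ Y, f x = g fun i => x (y i)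



/-- `f` is a bounded continuous function. -/

lemma sin_near_id {s : ℝ} (hs : |s| ≤ 1) : |Real.sin s - s| ≤ |s| ^ 3 := by
  have key : ∀ t : ℝ, 0 ≤ t → t ≤ 1 → |Real.sin t - t| ≤ |t| ^ 3 := by
    intro t ht ht1
    rcases eq_or_lt_of_le ht with h | h
    · simp [← h]
    · have h1 : Real.sin t < t := Real.sin_lt h
      have h2 : t - t ^ 3 / 4 < Real.sin t := by
        have := Real.sin_gt_sub_cube h; linarith [pow_pos h 3]
      rw [abs_of_neg (by linarith), abs_of_pos h]
      nlinarith [pow_pos h 3]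
  rcases le_or_gt 0 s with h | h
  · exact key s h (by rwa [abs_of_nonneg h] at hs)
  · have := key (-s) (by linarith) (by rwa [abs_of_neg h] at hs)
    rw [Real.sin_neg, abs_neg] at *
    calc |Real.sin s - s| = |-(Real.sin s) - -s| := by rw [← abs_neg]; ring_nf
    _ ≤ |s| ^ 3 := by rw [← abs_neg s]; simpa using this

lemma trunc_exists (a c : ℝ) (ha : 1 ≤ a) (hac : a ≤ c) :
    ∃ χ : ℝ → ℝ, ContDiff ℝ (⊤ : ℕ∞) χ ∧ (∀ t, |χ t| ≤ c) ∧
      ∀ t, |t| ≤ a → |χ t - t| ≤ a ^ 3 / c ^ 2 := by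
  have hc : (0:ℝ) < c := lt_of_lt_of_le one_pos (ha.trans hac)
  refine ⟨fun t => c * Real.sin (t / c), ?_, ?_, ?_⟩
  · exact contDiff_const.mul (Real.contDiff_sin.comp (contDiff_id.div_const c))
  · intro t
    rw [abs_mul, abs_of_pos hc]
    calc c * |Real.sin (t / c)| ≤ c * 1 :=
      mul_le_mul_of_nonneg_left (Real.abs_sin_le_one (t/c)) hc.le
    _ = c := mul_one c
  · intro t ht
    have h1 : |t / c| ≤ 1 := by
      rw [abs_div, abs_of_pos hc, div_le_one hc]; linarith
    have := sin_near_id h1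
    have hct : c * (t / c) = t := by field_simp
    calc |c * Real.sin (t / c) - t| = |c * (Real.sin (t / c) - t / c)| := by
          rw [mul_sub, hct]
    _ = c * |Real.sin (t / c) - t / c| := by rw [abs_mul, abs_of_pos hc]
    _ ≤ c * |t / c| ^ 3 := mul_le_mul_of_nonneg_left this hc.le
    _ = |t| ^ 3 / c ^ 2 := by
          rw [abs_div, abs_of_pos hc]; field_simp
    _ ≤ a ^ 3 / c ^ 2 := by
          apply div_le_div_of_nonneg_right ?_ (by positivity)
          · exact pow_le_pow_left₀ (abs_nonneg t) ht 3


lemma psi_lower_bound {Y : Type*} [NormedAddCommGroup Y] [NormedSpace ℝ Y]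
    (ψ : WeakDual ℝ Y → ℝ) (hpos : ∀ x, 0 < ψ x)
    (hcomp : ∀ R > (0 : ℝ), IsCompact {x : WeakDual ℝ Y | ψ x ≤ R}) :
    ∃ c > (0:ℝ), ∀ x, c ≤ ψ x := by
  by_contra hcon
  push_neg at hcon
  have hne : ∀ r : {r : ℝ // 0 < r}, ({x : WeakDual ℝ Y | ψ x ≤ r.1}).Nonempty := by
    intro r
    obtain ⟨x, hx⟩ := hcon r.1 r.2
    exact ⟨x, hx.le⟩
  have key := IsCompact.nonempty_iInter_of_directed_nonempty_isCompact_isClosed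
    (fun r : {r : ℝ // 0 < r} => {x : WeakDual ℝ Y | ψ x ≤ r.1})
    (fun r s => ⟨⟨min r.1 s.1, lt_min r.2 s.2⟩,
      fun x (hx : ψ x ≤ _) => show ψ x ≤ _ from le_trans hx (min_le_left _ _),
      fun x (hx : ψ x ≤ _) => show ψ x ≤ _ from le_trans hx (min_le_right _ _)⟩)
    hne (fun r => hcomp r.1 r.2) (fun r => (hcomp r.1 r.2).isClosed)
  obtain ⟨x, hx⟩ := key
  simp only [Set.mem_iInter] at hx
  have := hx ⟨ψ x / 2, by linarith [hpos x]⟩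
  simp only [Set.mem_setOf_eq] at this
  linarith [hpos x]




/-- The evaluation continuous map on a subset K. -/
noncomputable def evalCM {Y : Type*} [NormedAddCommGroup Y] [NormedSpace ℝ Y] (K : Set (WeakDual ℝ Y)) (y : Y) : C(K, ℝ) :=
  ⟨fun x => (x : WeakDual ℝ Y) y, (WeakDual.eval_continuous y).comp continuous_subtype_val⟩

lemma adjoin_cylinder {Y : Type*} [NormedAddCommGroup Y] [NormedSpace ℝ Y] (K : Set (WeakDual ℝ Y)) (p : C(K, ℝ))
    (hp : p ∈ Algebra.adjoin ℝ (Set.range (evalCM K))) :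
    ∃ (N : ℕ) (q : (Fin N → ℝ) → ℝ) (y : Fin N → Y),
      ContDiff ℝ (⊤ : ℕ∞) q ∧ ∀ x : K, p x = q fun i => (x : WeakDual ℝ Y) (y i) := by
  induction hp using Algebra.adjoin_induction with
  | mem p hp =>
    obtain ⟨y, rfl⟩ := hp
    exact ⟨1, fun v => v 0, fun _ => y,
      (ContinuousLinearMap.proj (R := ℝ) (φ := fun _ : Fin 1 => ℝ) 0).contDiff,
      fun x => rfl⟩
  | algebraMap r =>
    exact ⟨0, fun _ => r, Fin.elim0, contDiff_const, fun x => rfl⟩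
  | add p1 p2 hp1 hp2 ih1 ih2 =>
    obtain ⟨N1, q1, y1, hq1, he1⟩ := ih1
    obtain ⟨N2, q2, y2, hq2, he2⟩ := ih2
    refine ⟨N1 + N2,
      fun v => q1 (fun i => v (Fin.castAdd N2 i)) + q2 (fun j => v (Fin.natAdd N1 j)),
      Fin.append y1 y2, ?_, ?_⟩
    · exact (hq1.comp (contDiff_pi.2 fun i =>
        (ContinuousLinearMap.proj (R := ℝ) (φ := fun _ : Fin (N1+N2) => ℝ)
          (Fin.castAdd N2 i)).contDiff)).add
        (hq2.comp (contDiff_pi.2 fun j =>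
        (ContinuousLinearMap.proj (R := ℝ) (φ := fun _ : Fin (N1+N2) => ℝ)
          (Fin.natAdd N1 j)).contDiff))
    · intro x
      simp only [ContinuousMap.add_apply, he1 x, he2 x, Fin.append_left, Fin.append_right]
  | mul p1 p2 hp1 hp2 ih1 ih2 =>
    obtain ⟨N1, q1, y1, hq1, he1⟩ := ih1
    obtain ⟨N2, q2, y2, hq2, he2⟩ := ih2
    refine ⟨N1 + N2,
      fun v => q1 (fun i => v (Fin.castAdd N2 i)) * q2 (fun j => v (Fin.natAdd N1 j)),
      Fin.append y1 y2, ?_, ?_⟩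
    · exact (hq1.comp (contDiff_pi.2 fun i =>
        (ContinuousLinearMap.proj (R := ℝ) (φ := fun _ : Fin (N1+N2) => ℝ)
          (Fin.castAdd N2 i)).contDiff)).mul
        (hq2.comp (contDiff_pi.2 fun j =>
        (ContinuousLinearMap.proj (R := ℝ) (φ := fun _ : Fin (N1+N2) => ℝ)
          (Fin.natAdd N1 j)).contDiff))
    · intro x
      simp only [ContinuousMap.mul_apply, he1 x, he2 x, Fin.append_left, Fin.append_right]


/-- The algebra of bounded smooth cylinder functions is dense in
`𝓑^ψ(X_{w*})` with respect to the weighted sup-norm. -/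
theorem smooth_cylinder_dense_in_Bpsi
    {Y : Type*} [NormedAddCommGroup Y] [NormedSpace ℝ Y] [CompleteSpace Y]
    (ψ : WeakDual ℝ Y → ℝ) (hpos : ∀ x, 0 < ψ x)
    (hcomp : ∀ R > (0 : ℝ), IsCompact {x : WeakDual ℝ Y | ψ x ≤ R})
    (f : WeakDual ℝ Y → ℝ) (hf : MemBpsi ψ f) :
    ∀ ε > (0 : ℝ), ∃ h : WeakDual ℝ Y → ℝ, IsSmoothCylinder h ∧
      ∀ x, (ψ x)⁻¹ * |f x - h x| ≤ ε := by
  intro ε hε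
  obtain ⟨c0, hc0pos, hc0⟩ := psi_lower_bound ψ hpos hcomp
  obtain ⟨g0, ⟨hg0c, M0, hM0⟩, hfg0⟩ := hf (ε/2) (by linarith)
  set M : ℝ := max M0 0 with hMdef
  have hMb : ∀ x, |g0 x| ≤ M := fun x => (hM0 x).trans (le_max_left _ _)
  have hM0' : (0:ℝ) ≤ M := le_max_right _ _
  set a : ℝ := M + 1 with hadef
  have ha : (1:ℝ) ≤ a := by simp [hadef]; linarith
  set η : ℝ := min 1 (c0 * ε / 8) with hηdef
  have hη : 0 < η := lt_min one_pos (by positivity)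
  have hη1 : η ≤ 1 := min_le_left _ _
  have hη2 : η ≤ c0 * ε / 8 := min_le_right _ _
  set c : ℝ := max a (a ^ 3 / η) with hcdef
  have hac : a ≤ c := le_max_left _ _
  have hc1 : (1:ℝ) ≤ c := ha.trans hac
  have herr : a ^ 3 / c ^ 2 ≤ η := by
    have h3 : a ^ 3 ≤ c * η := (div_le_iff₀ hη).1 (le_max_right _ _)
    have hcc2 : c ≤ c ^ 2 := by nlinarith
    rw [div_le_iff₀ (by positivity)]
    calc a ^ 3 ≤ c * η := h3
    _ = η * c := mul_comm _ _
    _ ≤ η * c ^ 2 := mul_le_mul_of_nonneg_left hcc2 hη.le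
  obtain ⟨χ, hχs, hχb, hχe⟩ := trunc_exists a c ha hac
  set R : ℝ := max 1 (2 * (M + c) / ε) with hRdef
  have hR : (0:ℝ) < R := lt_of_lt_of_le one_pos (le_max_left _ _)
  set K : Set (WeakDual ℝ Y) := {x | ψ x ≤ R} with hKdef
  have hK : IsCompact K := hcomp R hR
  haveI : CompactSpace K := isCompact_iff_compactSpace.mp hK
  set A : Subalgebra ℝ C(K, ℝ) := Algebra.adjoin ℝ (Set.range (evalCM K)) with hAdef
  have hsep : A.SeparatesPoints := by
    intro x1 x2 hne
    have hvne : (x1 : WeakDual ℝ Y) ≠ x2 := fun h => hne (Subtype.ext h)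
    have : ∃ y : Y, (x1 : WeakDual ℝ Y) y ≠ (x2 : WeakDual ℝ Y) y := by
      by_contra h'
      push_neg at h'
      exact hvne (DFunLike.ext _ _ h')
    obtain ⟨y, hy⟩ := this
    exact ⟨evalCM K y, ⟨evalCM K y, Algebra.subset_adjoin ⟨y, rfl⟩, rfl⟩, hy⟩
  have htop := ContinuousMap.subalgebra_topologicalClosure_eq_top_of_separatesPoints A hsep
  set g0K : C(K, ℝ) := ⟨fun x => g0 x, hg0c.comp continuous_subtype_val⟩ with hg0Kdef
  have hmem : g0K ∈ closure (A : Set C(K, ℝ)) := by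
    have h : g0K ∈ A.topologicalClosure := htop ▸ Algebra.mem_top
    rw [← Subalgebra.topologicalClosure_coe]
    exact h
  obtain ⟨p, hpA, hdist⟩ := Metric.mem_closure_iff.1 hmem η hη
  obtain ⟨N, q, y, hq, heq⟩ := adjoin_cylinder K p hpA
  refine ⟨fun x => χ (q fun i => x (y i)),
    ⟨N, fun v => χ (q v), y, hχs.comp hq, ⟨c, fun v => hχb _⟩, fun x => rfl⟩, ?_⟩
  intro x
  have hψ := hpos x
  have hψinv : (0:ℝ) ≤ (ψ x)⁻¹ := inv_nonneg.2 hψ.le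
  by_cases hxK : ψ x ≤ R
  · -- on the compact set
    set xK : K := ⟨x, hxK⟩ with hxKdef
    have hd : |g0 x - p xK| ≤ η := by
      have h1 : dist (g0K xK) (p xK) ≤ dist g0K p := ContinuousMap.dist_apply_le_dist xK
      have h2 : dist g0K p < η := hdist
      rw [Real.dist_eq] at h1
      exact le_of_lt (lt_of_le_of_lt h1 h2)
    set v : ℝ := q fun i => x (y i) with hvdef
    have hpv : p xK = v := heq xK
    rw [hpv] at hd
    have hv : |v| ≤ a := by
      have := abs_sub_abs_le_abs_sub v (g0 x)
      have h3 := hMb x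
      rw [abs_sub_comm] at this
      simp only [hadef]
      calc |v| ≤ |g0 x| + |g0 x - v| := by
            have := abs_sub_abs_le_abs_sub v (g0 x)
            have h4 : |v| - |g0 x| ≤ |v - g0 x| := abs_sub_abs_le_abs_sub v (g0 x)
            rw [abs_sub_comm] at h4
            linarith
      _ ≤ M + 1 := add_le_add h3 (hd.trans hη1)
    have hχv : |χ v - v| ≤ η := (hχe v hv).trans herr
    have hbound : |f x - χ v| ≤ |f x - g0 x| + 2 * η := by
      calc |f x - χ v| ≤ |f x - g0 x| + |g0 x - χ v| := abs_sub_le _ _ _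
      _ ≤ |f x - g0 x| + (|g0 x - v| + |v - χ v|) :=
          add_le_add le_rfl (abs_sub_le _ _ _)
      _ ≤ |f x - g0 x| + 2 * η := by
          rw [abs_sub_comm v (χ v)]
          linarith
    calc (ψ x)⁻¹ * |f x - χ v| ≤ (ψ x)⁻¹ * (|f x - g0 x| + 2 * η) :=
          mul_le_mul_of_nonneg_left hbound hψinv
    _ = (ψ x)⁻¹ * |f x - g0 x| + (ψ x)⁻¹ * (2 * η) := mul_add _ _ _
    _ ≤ ε / 2 + c0⁻¹ * (2 * η) := by
          refine add_le_add (hfg0 x) (mul_le_mul_of_nonneg_right ?_ (by linarith))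
          exact inv_anti₀ hc0pos (hc0 x)
    _ ≤ ε := by
          have hcc : c0 * c0⁻¹ = 1 := mul_inv_cancel₀ hc0pos.ne'
          have hinv : (0:ℝ) ≤ c0⁻¹ := inv_nonneg.2 hc0pos.le
          nlinarith [mul_le_mul_of_nonneg_left hη2 hinv]
  · -- outside
    push_neg at hxK
    have hψR : (ψ x)⁻¹ ≤ R⁻¹ := inv_anti₀ hR hxK.le
    have hRinv : (0:ℝ) ≤ R⁻¹ := inv_nonneg.2 hR.le
    set v : ℝ := q fun i => x (y i) with hvdef
    have hbound : |f x - χ v| ≤ |f x - g0 x| + (M + c) := by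
      calc |f x - χ v| ≤ |f x - g0 x| + |g0 x - χ v| := abs_sub_le _ _ _
      _ ≤ |f x - g0 x| + (|g0 x| + |χ v|) := add_le_add le_rfl (abs_sub _ _)
      _ ≤ |f x - g0 x| + (M + c) := add_le_add le_rfl (add_le_add (hMb x) (hχb v))
    have hMC : (M + c) / R ≤ ε / 2 := by
      rw [div_le_iff₀ hR]
      have : 2 * (M + c) / ε ≤ R := le_max_right _ _
      rw [div_le_iff₀ hε] at this
      nlinarith
    calc (ψ x)⁻¹ * |f x - χ v| ≤ (ψ x)⁻¹ * (|f x - g0 x| + (M + c)) :=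
          mul_le_mul_of_nonneg_left hbound hψinv
    _ = (ψ x)⁻¹ * |f x - g0 x| + (ψ x)⁻¹ * (M + c) := mul_add _ _ _
    _ ≤ ε / 2 + R⁻¹ * (M + c) := by
          refine add_le_add (hfg0 x) (mul_le_mul_of_nonneg_right hψR (by linarith))
    _ ≤ ε := by
          rw [inv_mul_eq_div, mul_comm] at *
          have : (M + c) / R ≤ ε / 2 := hMC
          linarith [hMC]
end

section
/- Let Y be a separable Banach space and X = Y* with weak-* topology, ψ an admissible weight. If for every r > 0 there exists R > 0 such that the closed ball C_r(0) ⊂ K_R = {ψ ≤ R}, then every f ∈ 𝓑^ψ(X_{w*}) is sequentially weak-* continuous on X; in particular f is continuous with respect to the norm topology on X. -/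
/-!
On a sublevel set `{ψ ≤ R}` the weight is bounded, so `‖·‖_ψ`-approximation by continuous
functions is uniform approximation there, and `f` is continuous on every sublevel set. A weak-*
convergent sequence in the dual of a Banach space is norm bounded (Banach–Steinhaus), so by the
hypothesis on balls it lies, together with its limit, in a single sublevel set; this gives
sequential weak-* continuity. Norm convergence implies weak-* convergence, and the norm topology
is sequential.
-/

open Filter Topology Set

theorem MemBpsi.continuousOn_setOf_le {X : Type*} [TopologicalSpace X] {ψ f : X → ℝ}
    (hpos : ∀ x, 0 < ψ x) (hf : MemBpsi ψ f) (R : ℝ) : ContinuousOn f {x | ψ x ≤ R} := by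
  refine continuousOn_of_uniform_approx_of_continuousOn fun U hU => ?_
  obtain ⟨ε, hε, hεU⟩ := Metric.mem_uniformity_dist.1 hU
  obtain ⟨g, ⟨hg, -⟩, hfg⟩ := hf (ε / (|R| + 1)) (by positivity)
  refine ⟨g, hg.continuousOn, fun x hx => hεU ?_⟩
  calc dist (f x) (g x) = |f x - g x| := Real.dist_eq _ _
    _ ≤ ψ x * (ε / (|R| + 1)) := (inv_mul_le_iff₀ (hpos x)).1 (hfg x)
    _ ≤ |R| * (ε / (|R| + 1)) := by gcongr; exact hx.trans (le_abs_self R)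
    _ < ε := by
      rw [← mul_div_assoc, div_lt_iff₀ (by positivity)]
      nlinarith

theorem WeakDual.exists_pos_norm_le_of_tendsto {𝕜 E : Type*} [NontriviallyNormedField 𝕜]
    [NormedAddCommGroup E] [NormedSpace 𝕜 E] [CompleteSpace E]
    {u : ℕ → WeakDual 𝕜 E} {x : WeakDual 𝕜 E} (hux : Tendsto u atTop (𝓝 x)) :
    ∃ r > 0, ∀ y ∈ insert x (range u), ‖WeakDual.toStrongDual y‖ ≤ r := by
  have hb := WeakDual.isBounded_iff_isVonNBounded.2 ((hux.isVonNBounded_range 𝕜).insert x)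
  rw [← WeakDual.isBounded_toWeakDual_preimage_iff_isBounded] at hb
  obtain ⟨r, hr, hle⟩ := hb.exists_pos_norm_le
  exact ⟨r, hr, fun y hy => hle (WeakDual.toStrongDual y) hy⟩

theorem memBpsi_sequentially_weakStar_continuous_general
    {Y : Type*} [NormedAddCommGroup Y] [NormedSpace ℝ Y] [CompleteSpace Y]
    (ψ : WeakDual ℝ Y → ℝ) (hpos : ∀ x, 0 < ψ x)
    (hball : ∀ r > (0 : ℝ), ∃ R > (0 : ℝ), ∀ x : WeakDual ℝ Y,
      ‖WeakDual.toStrongDual x‖ ≤ r → ψ x ≤ R)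
    (f : WeakDual ℝ Y → ℝ) (hf : MemBpsi ψ f) :
    (∀ (u : ℕ → WeakDual ℝ Y) (x : WeakDual ℝ Y),
      Tendsto u atTop (𝓝 x) → Tendsto (fun n => f (u n)) atTop (𝓝 (f x))) ∧
    Continuous fun x : StrongDual ℝ Y => f (StrongDual.toWeakDual x) := by
  have hseq : ∀ (u : ℕ → WeakDual ℝ Y) (x : WeakDual ℝ Y),
      Tendsto u atTop (𝓝 x) → Tendsto (fun n => f (u n)) atTop (𝓝 (f x)) := by
    intro u x hux
    obtain ⟨r, hr, hnorm⟩ := WeakDual.exists_pos_norm_le_of_tendsto hux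
    obtain ⟨R, -, hR⟩ := hball r hr
    have hsub : ∀ y ∈ insert x (range u), ψ y ≤ R := fun y hy => hR y (hnorm y hy)
    have hux' : Tendsto u atTop (𝓝[{y | ψ y ≤ R}] x) :=
      tendsto_nhdsWithin_iff.2
        ⟨hux, Eventually.of_forall fun n => hsub _ (mem_insert_of_mem _ (mem_range_self n))⟩
    exact ((hf.continuousOn_setOf_le hpos R) x (hsub x (mem_insert x _))).tendsto.comp hux'
  refine ⟨hseq, continuous_iff_seqContinuous.2 fun u x hux => ?_⟩
  exact hseq _ _ ((NormedSpace.Dual.toWeakDual_continuous.tendsto x).comp hux)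

/-- Let `Y` be a separable Banach space, `X = Y*` with the weak-* topology and
`ψ` an admissible weight.  If every norm-closed ball `C_r(0)` is contained in some sublevel
set `K_R = {ψ ≤ R}`, then every `f ∈ 𝓑^ψ(X_{w*})` is sequentially weak-* continuous; in
particular `f` is continuous for the norm topology on `X`. -/
theorem memBpsi_sequentially_weakStar_continuous
    {Y : Type*} [NormedAddCommGroup Y] [NormedSpace ℝ Y] [CompleteSpace Y]
    [TopologicalSpace.SeparableSpace Y]
    (ψ : WeakDual ℝ Y → ℝ) (hpos : ∀ x, 0 < ψ x)
    (hcomp : ∀ R > (0 : ℝ), IsCompact {x : WeakDual ℝ Y | ψ x ≤ R})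
    (hball : ∀ r > (0 : ℝ), ∃ R > (0 : ℝ), ∀ x : WeakDual ℝ Y,
      ‖WeakDual.toStrongDual x‖ ≤ r → ψ x ≤ R)
    (f : WeakDual ℝ Y → ℝ) (hf : MemBpsi ψ f) :
    (∀ (u : ℕ → WeakDual ℝ Y) (x : WeakDual ℝ Y),
      Tendsto u atTop (𝓝 x) → Tendsto (fun n => f (u n)) atTop (𝓝 (f x))) ∧
    Continuous fun x : StrongDual ℝ Y => f (StrongDual.toWeakDual x) :=
  memBpsi_sequentially_weakStar_continuous_general ψ hpos hball f hf
end

section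
/- Let (x(t,x_0)) be a Markov process on X with E[ψ(x(t,x_0))] ≤ C ψ(x_0) for t ∈ [0,ε]. Then for every f ∈ 𝓑^ψ(X_{w*}) and every x_0 ∈ X, lim_{t→0+} E[f(x(t,x_0))] = f(x_0), provided the trajectories t ↦ x(t,x_0) are right-continuous in the weak-* topology. -/
open MeasureTheory Filter Topology

/-!
Approximate `f` by a bounded continuous `g` with `|f - g| ≤ η ψ`. Then
`|f(x_t) - f(x₀)| ≤ e_t + η (ψ(x_t) + ψ(x₀))`, where the excess
`e_t = (|f(x_t) - f(x₀)| - η (ψ(x_t) + ψ(x₀)))⁺` is measurable (unlike `g(x_t)`) and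
squeezed between `0` and `|g(x_t) - g(x₀)|`; the latter is bounded and tends to `0` pointwise by right-continuity, so
`E[e_t] → 0` by dominated convergence. The moment bound `E[ψ(x_t)] ≤ C ψ(x₀)` controls the rest,
so `limsup_{t → 0+} |E[f(x_t)] - f(x₀)| ≤ η (C + 1) ψ(x₀)` for every `η > 0`.
-/

theorem tendsto_of_forall_pos_eventually_abs_sub_le {ι : Type*} {l : Filter ι} {F : ι → ℝ}
    {L K : ℝ}
    (h : ∀ η > 0, ∃ G : ι → ℝ, Tendsto G l (𝓝 0) ∧ ∀ᶠ t in l, |F t - L| ≤ G t + η * K) :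
    Tendsto F l (𝓝 L) := by
  rw [Metric.tendsto_nhds]
  intro δ hδ
  set η := δ / (2 * (|K| + 1))
  have hη : 0 < η := by positivity
  have hηK : η * K < δ / 2 := by
    calc η * K ≤ η * |K| := mul_le_mul_of_nonneg_left (le_abs_self K) hη.le
      _ < η * (|K| + 1) := by gcongr; linarith
      _ = δ / 2 := by simp only [η]; field_simp
  obtain ⟨G, hG, hFG⟩ := h η hη
  filter_upwards [hFG, hG.eventually_lt_const (half_pos hδ)] with t hFt hGt
  rw [Real.dist_eq]
  linarith

theorem MemBpsi.exists_abs_sub_le {X : Type*} [TopologicalSpace X] {ψ f : X → ℝ}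
    (hψ : ∀ p, 0 < ψ p) (hf : MemBpsi ψ f) {η : ℝ} (hη : 0 < η) :
    ∃ g, MemCb g ∧ ∀ p, |f p - g p| ≤ η * ψ p := by
  obtain ⟨g, hg, hfg⟩ := hf η hη
  exact ⟨g, hg, fun p => by have := hfg p; rwa [inv_mul_le_iff₀ (hψ p), mul_comm] at this⟩

section WeightedExcess

variable {Y : Type*} {f g ψ : Y → ℝ} {η : ℝ} {y₀ y : Y}

def weightedExcess (f ψ : Y → ℝ) (η : ℝ) (y₀ y : Y) : ℝ :=
  max (|f y - f y₀| - η * (ψ y + ψ y₀)) 0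

theorem weightedExcess_nonneg : 0 ≤ weightedExcess f ψ η y₀ y :=
  le_max_right _ _

theorem abs_sub_le_weightedExcess_add :
    |f y - f y₀| ≤ weightedExcess f ψ η y₀ y + η * (ψ y + ψ y₀) := by
  have := le_max_left (|f y - f y₀| - η * (ψ y + ψ y₀)) 0
  rw [weightedExcess]
  linarith

theorem weightedExcess_le_abs_sub (hfg : ∀ p, |f p - g p| ≤ η * ψ p) :
    weightedExcess f ψ η y₀ y ≤ |g y - g y₀| := by
  refine max_le ?_ (abs_nonneg _)
  have h₁ := abs_sub_le (f y) (g y) (f y₀)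
  have h₂ := abs_sub_le (g y) (g y₀) (f y₀)
  have h₃ := hfg y
  have h₄ : |g y₀ - f y₀| ≤ η * ψ y₀ := abs_sub_comm (f y₀) (g y₀) ▸ hfg y₀
  linarith

theorem weightedExcess_le_two_mul {M : ℝ} (hfg : ∀ p, |f p - g p| ≤ η * ψ p)
    (hM : ∀ p, |g p| ≤ M) : weightedExcess f ψ η y₀ y ≤ 2 * M := by
  have := abs_sub (g y) (g y₀)
  linarith [weightedExcess_le_abs_sub (y₀ := y₀) (y := y) hfg, hM y, hM y₀]

variable {Ω : Type*} [MeasurableSpace Ω] {μ : Measure Ω}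

theorem MeasureTheory.AEStronglyMeasurable.weightedExcess {X : Ω → Y}
    (hfX : AEStronglyMeasurable (fun ω => f (X ω)) μ)
    (hψX : AEStronglyMeasurable (fun ω => ψ (X ω)) μ) :
    AEStronglyMeasurable (fun ω => weightedExcess f ψ η y₀ (X ω)) μ := by
  have hcont : Continuous fun q : ℝ × ℝ => max (|q.1 - f y₀| - η * (q.2 + ψ y₀)) 0 := by
    fun_prop
  exact hcont.comp_aestronglyMeasurable (hfX.prodMk hψX)

theorem tendsto_integral_weightedExcess [TopologicalSpace Y] [IsFiniteMeasure μ] {ι : Type*}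
    {l : Filter ι} [l.IsCountablyGenerated] {X : ι → Ω → Y}
    (hg : MemCb g) (hfg : ∀ p, |f p - g p| ≤ η * ψ p)
    (hX : ∀ ω, Tendsto (fun t => X t ω) l (𝓝 y₀))
    (hfX : ∀ᶠ t in l, AEStronglyMeasurable (fun ω => f (X t ω)) μ)
    (hψX : ∀ᶠ t in l, AEStronglyMeasurable (fun ω => ψ (X t ω)) μ) :
    Tendsto (fun t => ∫ ω, weightedExcess f ψ η y₀ (X t ω) ∂μ) l (𝓝 0) := by
  obtain ⟨hgc, M, hM⟩ := hg
  have hmeas : ∀ᶠ t in l, AEStronglyMeasurable (fun ω => weightedExcess f ψ η y₀ (X t ω)) μ := by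
    filter_upwards [hfX, hψX] with t hf hψ
    exact hf.weightedExcess hψ
  have hbound : ∀ᶠ t in l, ∀ᵐ ω ∂μ, ‖weightedExcess f ψ η y₀ (X t ω)‖ ≤ 2 * M :=
    .of_forall fun t => .of_forall fun ω => by
      rw [Real.norm_of_nonneg weightedExcess_nonneg]
      exact weightedExcess_le_two_mul hfg hM
  have hlim : ∀ᵐ ω ∂μ, Tendsto (fun t => weightedExcess f ψ η y₀ (X t ω)) l (𝓝 0) := by
    refine .of_forall fun ω => ?_
    have hgX : Tendsto (fun t => |g (X t ω) - g y₀|) l (𝓝 0) := by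
      have := ((hgc.tendsto y₀).comp (hX ω)).sub_const (g y₀)
      simpa using this.abs
    exact squeeze_zero (fun _ => weightedExcess_nonneg)
      (fun _ => weightedExcess_le_abs_sub hfg) hgX
  simpa using tendsto_integral_filter_of_dominated_convergence _ hmeas hbound
    (integrable_const (2 * M)) hlim

theorem abs_integral_sub_le_integral_weightedExcess_add [IsProbabilityMeasure μ] {X : Ω → Y}
    {M : ℝ} (hM : ∀ p, |g p| ≤ M) (hfg : ∀ p, |f p - g p| ≤ η * ψ p)
    (hfX : AEStronglyMeasurable (fun ω => f (X ω)) μ) (hψX : Integrable (fun ω => ψ (X ω)) μ) :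
    |∫ ω, f (X ω) ∂μ - f y₀| ≤
      ∫ ω, weightedExcess f ψ η y₀ (X ω) ∂μ + η * (∫ ω, ψ (X ω) ∂μ + ψ y₀) := by
  have hfX_int : Integrable (fun ω => f (X ω)) μ := by
    refine ((integrable_const M).add (hψX.const_mul η)).mono' hfX (.of_forall fun ω => ?_)
    have := abs_sub_abs_le_abs_sub (f (X ω)) (g (X ω))
    show |f (X ω)| ≤ M + η * ψ (X ω)
    linarith [hfg (X ω), hM (X ω)]
  have hexcess_int : Integrable (fun ω => weightedExcess f ψ η y₀ (X ω)) μ :=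
    (integrable_const (2 * M)).mono' (hfX.weightedExcess hψX.aestronglyMeasurable)
      (.of_forall fun ω => by
        rw [Real.norm_of_nonneg weightedExcess_nonneg]
        exact weightedExcess_le_two_mul hfg hM)
  have hψX_add : Integrable (fun ω => ψ (X ω) + ψ y₀) μ := hψX.add (integrable_const _)
  have hrest_int : Integrable (fun ω => η * (ψ (X ω) + ψ y₀)) μ := hψX_add.const_mul η
  calc |∫ ω, f (X ω) ∂μ - f y₀| = |∫ ω, (f (X ω) - f y₀) ∂μ| := by
        rw [integral_sub hfX_int (integrable_const _), integral_const, probReal_univ, one_smul]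
    _ ≤ ∫ ω, |f (X ω) - f y₀| ∂μ := abs_integral_le_integral_abs
    _ ≤ ∫ ω, (weightedExcess f ψ η y₀ (X ω) + η * (ψ (X ω) + ψ y₀)) ∂μ :=
        integral_mono (hfX_int.sub (integrable_const _)).abs (hexcess_int.add hrest_int)
          fun ω => abs_sub_le_weightedExcess_add
    _ = ∫ ω, weightedExcess f ψ η y₀ (X ω) ∂μ + η * (∫ ω, ψ (X ω) ∂μ + ψ y₀) := by
        rw [integral_add hexcess_int hrest_int, integral_const_mul, integral_add hψX
          (integrable_const _), integral_const, probReal_univ, one_smul]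

end WeightedExcess

theorem markov_pointwise_continuity_at_zero_general
    {X : Type*} [TopologicalSpace X]
    {Ω : Type*} [MeasurableSpace Ω] (μ : Measure Ω) [IsProbabilityMeasure μ]
    (ψ : X → ℝ) (hψpos : ∀ p, 0 < ψ p)
    (C ε : ℝ) (hε : 0 < ε)
    (x : ℝ → X → Ω → X)
    (hrc : ∀ (x₀ : X) (ω : Ω),
      Tendsto (fun t => x t x₀ ω) (𝓝[>] (0 : ℝ)) (𝓝 x₀))
    (hψint : ∀ x₀ : X, ∀ t ∈ Set.Icc (0 : ℝ) ε,
      Integrable (fun ω => ψ (x t x₀ ω)) μ)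
    (hbound : ∀ x₀ : X, ∀ t ∈ Set.Icc (0 : ℝ) ε,
      ∫ ω, ψ (x t x₀ ω) ∂μ ≤ C * ψ x₀)
    (f : X → ℝ) (hf : MemBpsi ψ f)
    (hfmeas : ∀ (t : ℝ) (x₀ : X), AEStronglyMeasurable (fun ω => f (x t x₀ ω)) μ) :
    ∀ x₀ : X,
      Tendsto (fun t => ∫ ω, f (x t x₀ ω) ∂μ) (𝓝[>] (0 : ℝ)) (𝓝 (f x₀)) := by
  intro x₀
  refine tendsto_of_forall_pos_eventually_abs_sub_le (K := C * ψ x₀ + ψ x₀) fun η hη => ?_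
  obtain ⟨g, hg, hfg⟩ := hf.exists_abs_sub_le hψpos hη
  obtain ⟨M, hM⟩ := hg.2
  have hsmall : ∀ᶠ t in 𝓝[>] (0 : ℝ), t ∈ Set.Icc (0 : ℝ) ε :=
    mem_of_superset (Ioo_mem_nhdsGT hε) Set.Ioo_subset_Icc_self
  refine ⟨_, tendsto_integral_weightedExcess hg hfg (hrc x₀) (.of_forall fun t => hfmeas t x₀)
    (hsmall.mono fun t ht => (hψint x₀ t ht).aestronglyMeasurable), ?_⟩
  filter_upwards [hsmall] with t ht
  calc |∫ ω, f (x t x₀ ω) ∂μ - f x₀|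
      ≤ ∫ ω, weightedExcess f ψ η x₀ (x t x₀ ω) ∂μ + η * (∫ ω, ψ (x t x₀ ω) ∂μ + ψ x₀) :=
        abs_integral_sub_le_integral_weightedExcess_add hM hfg
          (hfmeas t x₀) (hψint x₀ t ht)
    _ ≤ ∫ ω, weightedExcess f ψ η x₀ (x t x₀ ω) ∂μ + η * (C * ψ x₀ + ψ x₀) := by
        gcongr
        exact hbound x₀ t ht

/-- Let `(x(t,x₀))` be a Markov process on the weighted space `(X, ψ)` with
`E[ψ(x(t,x₀))] ≤ C ψ(x₀)` for `t ∈ [0,ε]` and trajectories that are right-continuous at `0`.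
Then for every `f ∈ 𝓑^ψ(X)` and every `x₀`, `E[f(x(t,x₀))] → f(x₀)` as `t → 0+`. -/
theorem markov_pointwise_continuity_at_zero
    {X : Type*} [TopologicalSpace X] [T2Space X] [CompletelyRegularSpace X]
    {Ω : Type*} [MeasurableSpace Ω] (μ : Measure Ω) [IsProbabilityMeasure μ]
    (ψ : X → ℝ) (hψpos : ∀ p, 0 < ψ p)
    (hcomp : ∀ R > (0 : ℝ), IsCompact {p : X | ψ p ≤ R})
    (C ε : ℝ) (hC : 0 < C) (hε : 0 < ε)
    (x : ℝ → X → Ω → X)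
    (hzero : ∀ (x₀ : X) (ω : Ω), x 0 x₀ ω = x₀)
    (hrc : ∀ (x₀ : X) (ω : Ω),
      Tendsto (fun t => x t x₀ ω) (𝓝[>] (0 : ℝ)) (𝓝 x₀))
    (hψint : ∀ x₀ : X, ∀ t ∈ Set.Icc (0 : ℝ) ε,
      Integrable (fun ω => ψ (x t x₀ ω)) μ)
    (hbound : ∀ x₀ : X, ∀ t ∈ Set.Icc (0 : ℝ) ε,
      ∫ ω, ψ (x t x₀ ω) ∂μ ≤ C * ψ x₀)
    (f : X → ℝ) (hf : MemBpsi ψ f)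
    (hfmeas : ∀ (t : ℝ) (x₀ : X), AEStronglyMeasurable (fun ω => f (x t x₀ ω)) μ) :
    ∀ x₀ : X,
      Tendsto (fun t => ∫ ω, f (x t x₀ ω) ∂μ) (𝓝[>] (0 : ℝ)) (𝓝 (f x₀)) :=
  markov_pointwise_continuity_at_zero_general μ ψ hψpos C ε hε x hrc hψint hbound f hf hfmeas
end

section
/- Let α < β and k ≥ 0 an integer. Then the weighted Sobolev space H^{k+1}_β(ℝ₊) (with weight e^{βx}) is compactly embedded in H^k_α(ℝ₊) (with weight e^{αx}). -/
open MeasureTheory Filter Topology Set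
open scoped ENNReal

/-!
On `(0, b]` the weight `e^{βx}` is bounded below by `e^{-|β| b}`, so an `H^{k+1}_β` bound controls
the unweighted `L²` norm of every derivative of order `≤ k + 1` there. By the fundamental theorem
of calculus and Cauchy–Schwarz, the derivatives of order `≤ k` are then uniformly `1/2`-Hölder and
uniformly bounded on `(0, b]`. Arzelà–Ascoli (a diagonal subsequence on a countable dense set,
upgraded by equicontinuity) gives a subsequence whose first `k` derivatives converge locally
uniformly on `(0, ∞)`, necessarily to the derivatives of a `C^k` function `g`. On `(0, R]` the
`H^k_α` error tends to zero by dominated convergence; on `(R, ∞)` it is at most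
`4 C e^{(α - β) R}`, since `e^{αx} ≤ e^{(α - β) R} e^{βx}` there, and this is small for large `R`
because `α < β`.
-/

theorem EquicontinuousAt.cauchy_map_of_mem_closure {ι X α : Type*} [TopologicalSpace X]
    [UniformSpace α] {F : ι → X → α} {l : Filter ι} {s : Set X} {x : X}
    (hF : EquicontinuousAt F x) (hs : ∀ y ∈ s, Cauchy (l.map (F · y))) (hx : x ∈ closure s) :
    Cauchy (l.map (F · x)) := by
  obtain ⟨y₀, hy₀⟩ := (mem_closure_iff_nhds.1 hx) univ univ_mem
  refine cauchy_map_iff.2 ⟨(cauchy_map_iff.1 (hs y₀ hy₀.2)).1, fun U hU => ?_⟩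
  obtain ⟨V, hV, hVsymm, hVU⟩ := comp_comp_symm_mem_uniformity_sets hU
  obtain ⟨y, hxy, hy⟩ := (mem_closure_iff_nhds.1 hx) _ (hF V hV)
  have hyV := (cauchy_map_iff.1 (hs y hy)).2 hV
  rw [mem_map] at hyV ⊢
  refine mem_of_superset hyV fun p hp => ?_
  exact hVU ⟨F p.2 y, ⟨F p.1 y, hxy p.1, hp⟩, SetRel.symm V (hxy p.2)⟩

theorem tendstoLocallyUniformlyOn_of_equicontinuousAt {ι X α : Type*} [TopologicalSpace X]
    [LocallyCompactSpace X] [UniformSpace α] {F : ι → X → α} {f : X → α} {l : Filter ι}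
    {s : Set X} (hs : IsOpen s) (hF : ∀ x ∈ s, EquicontinuousAt F x)
    (hf : ∀ x ∈ s, Tendsto (F · x) l (𝓝 (f x))) : TendstoLocallyUniformlyOn F f l s := by
  rw [tendstoLocallyUniformlyOn_iff_forall_isCompact hs]
  intro K hKs hK
  have hK' : ∀ K' ∈ ({K} : Set (Set X)), EquicontinuousOn F K' := fun _ hK' x hx =>
    (hF x (hKs (mem_singleton_iff.1 hK' ▸ hx))).equicontinuousWithinAt _
  have key := (EquicontinuousOn.tendsto_uniformOnFun_iff_pi' (by simpa using hK) hK' l f).2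
    (tendsto_pi_nhds.2 fun x => hf x (hKs (by simpa using x.2)))
  exact UniformOnFun.tendsto_iff_tendstoUniformlyOn.1 key K rfl

theorem exists_subseq_tendstoLocallyUniformlyOn {ι X α : Type*} [Countable ι]
    [TopologicalSpace X] [LocallyCompactSpace X] [TopologicalSpace.PseudoMetrizableSpace X]
    [SeminormedAddCommGroup α] [ProperSpace α] {F : ℕ → ι → X → α} {s : Set X}
    (hs : IsOpen s) (hsep : TopologicalSpace.IsSeparable s)
    (hF : ∀ i, ∀ x ∈ s, EquicontinuousAt (F · i) x)
    (hbdd : ∀ i, ∀ x ∈ s, ∃ M, ∀ n, ‖F n i x‖ ≤ M) :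
    ∃ φ : ℕ → ℕ, StrictMono φ ∧ ∃ G : ι → X → α,
      ∀ i, TendstoLocallyUniformlyOn (fun n => F (φ n) i) (G i) atTop s := by
  obtain ⟨t, hts, htc, hst⟩ := hsep.exists_countable_dense_subset
  have := htc.to_subtype
  choose M hM using hbdd
  obtain ⟨_, -, φ, hφ, hconv⟩ :=
    IsCompact.tendsto_subseq (x := fun n (p : ι × t) => F n p.1 p.2)
      (isCompact_univ_pi fun p => isCompact_closedBall (0 : α) (M p.1 p.2 (hts p.2.2)))
      fun n => mem_univ_pi.2 fun p => mem_closedBall_zero_iff.2 (hM _ _ _ n)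
  have hlim : ∀ i, ∀ x ∈ s, ∃ a, Tendsto (fun n => F (φ n) i x) atTop (𝓝 a) := by
    intro i x hx
    refine cauchySeq_tendsto_of_complete ?_
    refine ((hF i x hx).comp φ).cauchy_map_of_mem_closure (fun y hy => ?_) (hst hx)
    exact (tendsto_pi_nhds.1 hconv (i, ⟨y, hy⟩)).cauchy_map
  choose! G hG using hlim
  exact ⟨φ, hφ, G, fun i => tendstoLocallyUniformlyOn_of_equicontinuousAt hs
    (fun x hx => (hF i x hx).comp φ) (hG i)⟩

section
variable {𝕜 F : Type*} [NontriviallyNormedField 𝕜] [NormedAddCommGroup F] [NormedSpace 𝕜 F]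
  {s : Set 𝕜}

theorem ContDiffOn.hasDerivAt_iteratedDerivWithin {n : WithTop ℕ∞} {f : 𝕜 → F} {j : ℕ}
    {x : 𝕜} (hf : ContDiffOn 𝕜 n f s) (hs : IsOpen s) (hj : (j : WithTop ℕ∞) < n) (hx : x ∈ s) :
    HasDerivAt (iteratedDerivWithin j f s) (iteratedDerivWithin (j + 1) f s x) x := by
  have hd := (hf.differentiableOn_iteratedDerivWithin hj hs.uniqueDiffOn x hx)
    |>.differentiableAt (hs.mem_nhds hx)
  rw [iteratedDerivWithin_succ, derivWithin_of_isOpen hs hx]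
  exact hd.hasDerivAt

theorem eqOn_iteratedDerivWithin_of_hasDerivAt {g : ℕ → 𝕜 → F} {k : ℕ} (hs : IsOpen s)
    (hg : ∀ j < k, ∀ x ∈ s, HasDerivAt (g j) (g (j + 1) x) x) :
    ∀ j ≤ k, EqOn (iteratedDerivWithin j (g 0) s) (g j) s := by
  intro j hj
  induction j with
  | zero => exact fun x _ => by simp
  | succ j ih =>
    intro x hx
    rw [iteratedDerivWithin_succ, derivWithin_congr (ih (by omega)) (ih (by omega) hx),
      derivWithin_of_isOpen hs hx]
    exact (hg j (by omega) x hx).deriv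

theorem contDiffOn_of_hasDerivAt_succ {g : ℕ → 𝕜 → F} {k : ℕ} (hs : IsOpen s)
    (hg : ∀ j < k, ∀ x ∈ s, HasDerivAt (g j) (g (j + 1) x) x) (hk : ContinuousOn (g k) s) :
    ContDiffOn 𝕜 k (g 0) s := by
  have heq := eqOn_iteratedDerivWithin_of_hasDerivAt hs hg
  have hcont : ∀ j ≤ k, ContinuousOn (g j) s := by
    intro j hj
    rcases hj.lt_or_eq with hj | rfl
    · exact fun x hx => (hg j hj x hx).continuousAt.continuousWithinAt
    · exact hk
  refine contDiffOn_of_continuousOn_differentiableOn_deriv (n := k) (fun j hj => ?_)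
    fun j hj => ?_
  · exact (hcont j (by exact_mod_cast hj)).congr (heq j (by exact_mod_cast hj))
  · have hd : DifferentiableOn 𝕜 (g j) s := fun x hx =>
      (hg j (by exact_mod_cast hj) x hx).differentiableAt.differentiableWithinAt
    exact hd.congr (heq j (by exact_mod_cast hj.le))
end

theorem abs_sub_le_sqrt_integral_sq_mul_sqrt {u u' : ℝ → ℝ} {x y : ℝ} (hxy : x ≤ y)
    (hu : ∀ t ∈ Icc x y, HasDerivAt u (u' t) t) (hu' : ContinuousOn u' (Icc x y)) :
    |u y - u x| ≤ √(∫ t in Ioc x y, u' t ^ 2) * √(y - x) := by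
  have hint : IntegrableOn u' (Ioc x y) := (hu'.integrableOn_Icc).mono_set Ioc_subset_Icc_self
  have hL2 : MemLp u' (ENNReal.ofReal 2) (volume.restrict (Ioc x y)) := by
    obtain ⟨M, hM⟩ := isCompact_Icc.exists_bound_of_continuousOn hu'
    exact MemLp.of_bound hint.aestronglyMeasurable M
      (ae_restrict_of_forall_mem measurableSet_Ioc fun t ht => hM t (Ioc_subset_Icc_self ht))
  have hCS := integral_mul_le_Lp_mul_Lq_of_nonneg (μ := volume.restrict (Ioc x y))
    Real.HolderConjugate.two_two (Eventually.of_forall fun t => abs_nonneg (u' t))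
    (Eventually.of_forall fun _ => zero_le_one) hL2.abs (memLp_const 1)
  simp only [mul_one, integral_const, Real.rpow_two, sq_abs, ← Real.sqrt_eq_rpow] at hCS
  calc |u y - u x| = |∫ t in x..y, u' t| := by
        rw [intervalIntegral.integral_eq_sub_of_hasDerivAt
          (fun t ht => hu t (by rwa [uIcc_of_le hxy] at ht))
          ((intervalIntegrable_iff_integrableOn_Ioc_of_le hxy).2 hint)]
    _ ≤ ∫ t in Ioc x y, |u' t| := by
        rw [intervalIntegral.integral_of_le hxy]; exact abs_integral_le_integral_abs
    _ ≤ √(∫ t in Ioc x y, u' t ^ 2) * √(y - x) := by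
        simpa [Real.volume_Ioc, hxy] using hCS

/-- The squared norm of `u` in `L²_γ(ℝ₊) = L²((0, ∞), e^{γx} dx)`. -/
noncomputable def weightedEnergy (γ : ℝ) (u : ℝ → ℝ) : ℝ≥0∞ :=
  ∫⁻ x in Ioi 0, ENNReal.ofReal (u x ^ 2 * Real.exp (γ * x))

theorem lintegral_Ioc_sq_le_weightedEnergy (β b : ℝ) (u : ℝ → ℝ) :
    ∫⁻ x in Ioc 0 b, ENNReal.ofReal (u x ^ 2)
      ≤ ENNReal.ofReal (Real.exp (|β| * b)) * weightedEnergy β u := by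
  have hpt : ∀ x ∈ Ioc 0 b, ENNReal.ofReal (u x ^ 2)
      ≤ ENNReal.ofReal (Real.exp (|β| * b)) * ENNReal.ofReal (u x ^ 2 * Real.exp (β * x)) := by
    intro x hx
    rw [← ENNReal.ofReal_mul (Real.exp_nonneg _)]
    refine ENNReal.ofReal_le_ofReal ?_
    have : 1 ≤ Real.exp (|β| * b) * Real.exp (β * x) := by
      rw [← Real.exp_add, Real.one_le_exp_iff]
      nlinarith [neg_abs_le β, abs_nonneg β, hx.1, hx.2]
    nlinarith [sq_nonneg (u x)]
  calc ∫⁻ x in Ioc 0 b, ENNReal.ofReal (u x ^ 2)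
      ≤ ∫⁻ x in Ioc 0 b, ENNReal.ofReal (Real.exp (|β| * b)) *
          ENNReal.ofReal (u x ^ 2 * Real.exp (β * x)) :=
        setLIntegral_mono_ae' measurableSet_Ioc (ae_of_all _ hpt)
    _ ≤ ENNReal.ofReal (Real.exp (|β| * b)) * weightedEnergy β u := by
        rw [lintegral_const_mul' _ _ ENNReal.ofReal_ne_top]
        exact mul_le_mul_right (lintegral_mono_set Ioc_subset_Ioi_self) _

theorem integral_Ioc_sq_le_of_weightedEnergy_le {β b C x y : ℝ} {u : ℝ → ℝ} (hC : 0 ≤ C)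
    (hu : ContinuousOn u (Ioi 0)) (hE : weightedEnergy β u ≤ ENNReal.ofReal C)
    (hx : 0 < x) (hyb : y ≤ b) :
    ∫ t in Ioc x y, u t ^ 2 ≤ C * Real.exp (|β| * b) := by
  have hsub : Ioc x y ⊆ Ioc 0 b := Ioc_subset_Ioc hx.le hyb
  rw [integral_eq_lintegral_of_nonneg_ae (ae_of_all _ fun t => sq_nonneg (u t))
    (((hu.mono (hsub.trans Ioc_subset_Ioi_self)).aestronglyMeasurable measurableSet_Ioc).pow 2)]
  refine ENNReal.toReal_le_of_le_ofReal (by positivity) ?_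
  calc ∫⁻ t in Ioc x y, ENNReal.ofReal (u t ^ 2)
      ≤ ∫⁻ t in Ioc 0 b, ENNReal.ofReal (u t ^ 2) := lintegral_mono_set hsub
    _ ≤ ENNReal.ofReal (Real.exp (|β| * b)) * ENNReal.ofReal C :=
        (lintegral_Ioc_sq_le_weightedEnergy β b u).trans (mul_le_mul_right hE _)
    _ = ENNReal.ofReal (C * Real.exp (|β| * b)) := by
        rw [← ENNReal.ofReal_mul (Real.exp_nonneg _), mul_comm]

theorem abs_sub_le_of_weightedEnergy_deriv_le {β b C x y : ℝ} {u u' : ℝ → ℝ} (hC : 0 ≤ C)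
    (hu : ∀ t ∈ Ioi 0, HasDerivAt u (u' t) t) (hu' : ContinuousOn u' (Ioi 0))
    (hE : weightedEnergy β u' ≤ ENNReal.ofReal C) (hx : x ∈ Ioc 0 b) (hy : y ∈ Ioc 0 b) :
    |u y - u x| ≤ √(C * Real.exp (|β| * b)) * √|y - x| := by
  wlog hxy : x ≤ y generalizing x y
  · rw [abs_sub_comm, abs_sub_comm y]
    exact this hy hx (le_of_not_ge hxy)
  have hIcc : Icc x y ⊆ Ioi 0 := fun t ht => hx.1.trans_le ht.1
  calc |u y - u x| ≤ √(∫ t in Ioc x y, u' t ^ 2) * √(y - x) :=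
        abs_sub_le_sqrt_integral_sq_mul_sqrt hxy (fun t ht => hu t (hIcc ht)) (hu'.mono hIcc)
    _ ≤ √(C * Real.exp (|β| * b)) * √|y - x| := by
        rw [abs_of_nonneg (sub_nonneg.2 hxy)]
        gcongr
        exact integral_Ioc_sq_le_of_weightedEnergy_le hC hu' hE hx.1 hy.2

theorem abs_le_of_weightedEnergy_le {β b C x : ℝ} {u u' : ℝ → ℝ} (hC : 0 ≤ C)
    (hu : ∀ t ∈ Ioi 0, HasDerivAt u (u' t) t) (hu' : ContinuousOn u' (Ioi 0))
    (hE₀ : weightedEnergy β u ≤ ENNReal.ofReal C) (hE : weightedEnergy β u' ≤ ENNReal.ofReal C)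
    (hb : 1 ≤ b) (hx : x ∈ Ioc 0 b) :
    |u x| ≤ √(C * Real.exp |β|) + √(C * Real.exp (|β| * b)) * √b := by
  have hcont : ContinuousOn u (Ioi 0) := fun t ht => (hu t ht).continuousAt.continuousWithinAt
  obtain ⟨x₀, hx₀, hle⟩ := exists_le_setLAverage (μ := volume) (s := Ioc 0 1)
    (f := fun t => ENNReal.ofReal (u t ^ 2)) (by simp) (by simp)
    (((hcont.mono Ioc_subset_Ioi_self).aemeasurable measurableSet_Ioc).pow_const 2).ennreal_ofReal
  have hx₀sq : u x₀ ^ 2 ≤ C * Real.exp |β| := by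
    rw [setLAverage_eq, Real.volume_Ioc, sub_zero, ENNReal.ofReal_one, div_one] at hle
    have := hle.trans ((lintegral_Ioc_sq_le_weightedEnergy β 1 u).trans (mul_le_mul_right hE₀ _))
    rwa [mul_one, ← ENNReal.ofReal_mul (Real.exp_nonneg _), mul_comm,
      ENNReal.ofReal_le_ofReal_iff (by positivity)] at this
  have hx₀b : x₀ ∈ Ioc 0 b := ⟨hx₀.1, hx₀.2.trans hb⟩
  have hdist : |x - x₀| ≤ b :=
    abs_sub_le_iff.2 ⟨by linarith [hx₀.1, hx.2], by linarith [hx.1, hx₀.2]⟩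
  calc |u x| ≤ |u x₀| + |u x - u x₀| := by linarith [abs_sub_abs_le_abs_sub (u x) (u x₀)]
    _ ≤ √(C * Real.exp |β|) + √(C * Real.exp (|β| * b)) * √b := by
        gcongr
        · exact Real.abs_le_sqrt hx₀sq
        · exact (abs_sub_le_of_weightedEnergy_deriv_le hC hu hu' hE hx₀b hx).trans (by gcongr)

theorem equicontinuousAt_of_weightedEnergy_deriv_le {ι : Type*} {β C x₀ : ℝ}
    {u u' : ι → ℝ → ℝ} (hC : 0 ≤ C) (hu : ∀ i, ∀ t ∈ Ioi 0, HasDerivAt (u i) (u' i t) t)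
    (hu' : ∀ i, ContinuousOn (u' i) (Ioi 0))
    (hE : ∀ i, weightedEnergy β (u' i) ≤ ENNReal.ofReal C) (hx₀ : 0 < x₀) :
    EquicontinuousAt u x₀ := by
  refine Metric.equicontinuousAt_of_continuity_modulus
    (fun x => √(C * Real.exp (|β| * (x₀ + 1))) * √|x₀ - x|) ?_ u ?_
  · have : Continuous fun x => √(C * Real.exp (|β| * (x₀ + 1))) * √|x₀ - x| := by fun_prop
    simpa using this.tendsto x₀
  · filter_upwards [Ioo_mem_nhds hx₀ (lt_add_one x₀)] with x hx i
    exact abs_sub_le_of_weightedEnergy_deriv_le hC (hu i) (hu' i) (hE i) ⟨hx.1, hx.2.le⟩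
      ⟨hx₀, (lt_add_one x₀).le⟩

theorem exists_bound_iteratedDerivWithin_of_weightedEnergy_le {β C : ℝ} (hC : 0 ≤ C) {k : ℕ}
    {f : ℕ → ℝ → ℝ} (hf : ∀ n, ContDiffOn ℝ (k + 1) (f n) (Ioi 0))
    (hE : ∀ n, ∀ j ≤ k + 1,
      weightedEnergy β (iteratedDerivWithin j (f n) (Ioi 0)) ≤ ENNReal.ofReal C)
    {j : ℕ} (hj : j ≤ k) (R : ℝ) :
    ∃ M, ∀ n, ∀ x ∈ Ioc 0 R, |iteratedDerivWithin j (f n) (Ioi 0) x| ≤ M :=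
  ⟨_, fun n x hx => abs_le_of_weightedEnergy_le hC
    (fun t ht => (hf n).hasDerivAt_iteratedDerivWithin isOpen_Ioi
      (by exact_mod_cast Nat.lt_succ_of_le hj) ht)
    ((hf n).continuousOn_iteratedDerivWithin (by exact_mod_cast Nat.succ_le_succ hj)
      (uniqueDiffOn_Ioi 0))
    (hE n j (by omega)) (hE n (j + 1) (by omega)) (le_max_left 1 R)
    ⟨hx.1, hx.2.trans (le_max_right 1 R)⟩⟩

theorem exists_subseq_tendstoLocallyUniformlyOn_iteratedDerivWithin {β C : ℝ} (hC : 0 ≤ C)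
    {k : ℕ} {f : ℕ → ℝ → ℝ} (hf : ∀ n, ContDiffOn ℝ (k + 1) (f n) (Ioi 0))
    (hE : ∀ n, ∀ j ≤ k + 1,
      weightedEnergy β (iteratedDerivWithin j (f n) (Ioi 0)) ≤ ENNReal.ofReal C) :
    ∃ φ : ℕ → ℕ, StrictMono φ ∧ ∃ g : ℝ → ℝ, ContDiffOn ℝ k g (Ioi 0) ∧
      ∀ j ≤ k, TendstoLocallyUniformlyOn (fun n => iteratedDerivWithin j (f (φ n)) (Ioi 0))
        (iteratedDerivWithin j g (Ioi 0)) atTop (Ioi 0) := by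
  have hD : ∀ n, ∀ j ≤ k, ∀ x ∈ Ioi (0 : ℝ), HasDerivAt (iteratedDerivWithin j (f n) (Ioi 0))
      (iteratedDerivWithin (j + 1) (f n) (Ioi 0) x) x := fun n j hj x hx =>
    (hf n).hasDerivAt_iteratedDerivWithin isOpen_Ioi (by exact_mod_cast Nat.lt_succ_of_le hj) hx
  have hDc : ∀ n, ∀ j ≤ k + 1, ContinuousOn (iteratedDerivWithin j (f n) (Ioi 0)) (Ioi 0) :=
    fun n j hj =>
      (hf n).continuousOn_iteratedDerivWithin (by exact_mod_cast hj) (uniqueDiffOn_Ioi 0)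
  -- indexing by `min j k` gives a family over all of `ℕ` whose first `k + 1` members are the jet
  obtain ⟨φ, hφ, G, hG⟩ := exists_subseq_tendstoLocallyUniformlyOn
    (F := fun n j => iteratedDerivWithin (min j k) (f n) (Ioi 0)) isOpen_Ioi
    (.of_separableSpace _)
    (fun j x hx => equicontinuousAt_of_weightedEnergy_deriv_le hC
      (fun n => hD n _ (min_le_right j k)) (fun n => hDc n _ (by omega))
      (fun n => hE n _ (by omega)) hx)
    (fun j x hx =>
      (exists_bound_iteratedDerivWithin_of_weightedEnergy_le hC hf hE (min_le_right j k) x).imp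
        fun _ hM n => hM n x ⟨hx, le_rfl⟩)
  have hGj : ∀ j ≤ k,
      TendstoLocallyUniformlyOn (fun n => iteratedDerivWithin j (f (φ n)) (Ioi 0)) (G j) atTop
        (Ioi 0) := fun j hj => by simpa [min_eq_left hj] using hG j
  have hGd : ∀ j < k, ∀ x ∈ Ioi (0 : ℝ), HasDerivAt (G j) (G (j + 1) x) x := fun j hj x hx =>
    hasDerivAt_of_tendstoLocallyUniformlyOn isOpen_Ioi (hGj (j + 1) hj)
      (.of_forall fun n => hD (φ n) j hj.le) (fun y hy => (hGj j hj.le).tendsto_at hy) hx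
  have hGc : ContinuousOn (G k) (Ioi 0) :=
    (hGj k le_rfl).continuousOn (.of_forall fun n => hDc (φ n) k (by omega))
  exact ⟨φ, hφ, G 0, contDiffOn_of_hasDerivAt_succ isOpen_Ioi hGd hGc, fun j hj =>
    (hGj j hj).congr_right (eqOn_iteratedDerivWithin_of_hasDerivAt isOpen_Ioi hGd j hj).symm⟩

theorem ENNReal.tendsto_nhds_zero_of_le_add {ι κ : Type*} {l : Filter ι} {l' : Filter κ}
    [l'.NeBot]
    {a : ι → ℝ≥0∞} {b : κ → ι → ℝ≥0∞} {c : κ → ℝ≥0∞} (hb : ∀ R, Tendsto (b R) l (𝓝 0))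
    (hc : Tendsto c l' (𝓝 0)) (hab : ∀ᶠ R in l', ∀ n, a n ≤ b R n + c R) :
    Tendsto a l (𝓝 0) := by
  rw [ENNReal.tendsto_nhds_zero] at hc ⊢
  intro ε hε
  obtain ⟨R, hR, hcR⟩ := (hab.and (hc (ε / 2) (ENNReal.half_pos hε.ne'))).exists
  filter_upwards [ENNReal.tendsto_nhds_zero.1 (hb R) (ε / 2) (ENNReal.half_pos hε.ne')] with n hn
  calc a n ≤ b R n + c R := hR n
    _ ≤ ε / 2 + ε / 2 := add_le_add hn hcR
    _ = ε := ENNReal.add_halves ε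

theorem weightedEnergy_le_of_tendsto {γ : ℝ} {v : ℕ → ℝ → ℝ} {g : ℝ → ℝ} {B : ℝ≥0∞}
    (hv : ∀ n, AEMeasurable (v n) (volume.restrict (Ioi 0)))
    (hlim : ∀ x ∈ Ioi 0, Tendsto (v · x) atTop (𝓝 (g x)))
    (hB : ∀ n, weightedEnergy γ (v n) ≤ B) :
    weightedEnergy γ g ≤ B :=
  calc weightedEnergy γ g
      = ∫⁻ x in Ioi 0, liminf (fun n => ENNReal.ofReal (v n x ^ 2 * Real.exp (γ * x))) atTop :=
        setLIntegral_congr_fun measurableSet_Ioi fun x hx =>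
          (ENNReal.tendsto_ofReal (((hlim x hx).pow 2).mul_const _)).liminf_eq.symm
    _ ≤ liminf (fun n => weightedEnergy γ (v n)) atTop :=
        lintegral_liminf_le' fun n => by have := hv n; fun_prop
    _ ≤ B := liminf_le_of_frequently_le' (.of_forall hB)

theorem lintegral_Ioi_sub_sq_le {α β R : ℝ} (hαβ : α ≤ β) (hR : 0 ≤ R) {v g : ℝ → ℝ}
    (hv : AEMeasurable v (volume.restrict (Ioi 0))) :
    ∫⁻ x in Ioi R, ENNReal.ofReal ((v x - g x) ^ 2 * Real.exp (α * x))
      ≤ ENNReal.ofReal (2 * Real.exp ((α - β) * R)) *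
          (weightedEnergy β v + weightedEnergy β g) := by
  have hpt : ∀ x ∈ Ioi R, ENNReal.ofReal ((v x - g x) ^ 2 * Real.exp (α * x))
      ≤ ENNReal.ofReal (2 * Real.exp ((α - β) * R)) *
        (ENNReal.ofReal (v x ^ 2 * Real.exp (β * x)) +
          ENNReal.ofReal (g x ^ 2 * Real.exp (β * x))) := by
    intro x hx
    rw [← ENNReal.ofReal_add (by positivity) (by positivity),
      ← ENNReal.ofReal_mul (by positivity)]
    refine ENNReal.ofReal_le_ofReal ?_
    have hexp : Real.exp (α * x) ≤ Real.exp ((α - β) * R) * Real.exp (β * x) := by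
      rw [← Real.exp_add, Real.exp_le_exp]
      nlinarith [mem_Ioi.1 hx]
    calc (v x - g x) ^ 2 * Real.exp (α * x)
        ≤ (2 * (v x ^ 2 + g x ^ 2)) * (Real.exp ((α - β) * R) * Real.exp (β * x)) := by
          gcongr
          nlinarith [sq_nonneg (v x + g x)]
      _ = _ := by ring
  have hsub : Ioi R ⊆ Ioi 0 := Ioi_subset_Ioi hR
  calc ∫⁻ x in Ioi R, ENNReal.ofReal ((v x - g x) ^ 2 * Real.exp (α * x))
      ≤ ∫⁻ x in Ioi R, ENNReal.ofReal (2 * Real.exp ((α - β) * R)) *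
          (ENNReal.ofReal (v x ^ 2 * Real.exp (β * x)) +
            ENNReal.ofReal (g x ^ 2 * Real.exp (β * x))) :=
        setLIntegral_mono_ae' measurableSet_Ioi (ae_of_all _ hpt)
    _ ≤ _ := by
        have hvR := hv.mono_measure (Measure.restrict_mono hsub le_rfl)
        rw [lintegral_const_mul' _ _ ENNReal.ofReal_ne_top, lintegral_add_left' (by fun_prop)]
        gcongr <;> exact lintegral_mono_set hsub

theorem tendsto_lintegral_Ioc_sub_sq {α R M : ℝ} {v : ℕ → ℝ → ℝ} {g : ℝ → ℝ}
    (hv : ∀ n, AEMeasurable (v n) (volume.restrict (Ioc 0 R)))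
    (hM : ∀ n, ∀ x ∈ Ioc 0 R, |v n x| ≤ M)
    (hlim : ∀ x ∈ Ioc 0 R, Tendsto (v · x) atTop (𝓝 (g x))) :
    Tendsto (fun n => ∫⁻ x in Ioc 0 R, ENNReal.ofReal ((v n x - g x) ^ 2 * Real.exp (α * x)))
      atTop (𝓝 0) := by
  have hg : AEMeasurable g (volume.restrict (Ioc 0 R)) :=
    aemeasurable_of_tendsto_metrizable_ae' hv (ae_restrict_of_forall_mem measurableSet_Ioc hlim)
  have hgM : ∀ x ∈ Ioc 0 R, |g x| ≤ M := fun x hx =>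
    le_of_tendsto' (hlim x hx).abs fun n => hM n x hx
  have hbound : ∀ n, ∀ x ∈ Ioc 0 R, ENNReal.ofReal ((v n x - g x) ^ 2 * Real.exp (α * x))
      ≤ ENNReal.ofReal ((2 * M) ^ 2 * Real.exp (|α| * R)) := by
    intro n x hx
    refine ENNReal.ofReal_le_ofReal (mul_le_mul ?_ ?_ (Real.exp_nonneg _) (sq_nonneg _))
    · rw [sq_le_sq, abs_of_nonneg (by linarith [(abs_nonneg _).trans (hM n x hx)] : 0 ≤ 2 * M)]
      linarith [abs_sub (v n x) (g x), hM n x hx, hgM x hx]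
    · rw [Real.exp_le_exp]
      nlinarith [le_abs_self α, abs_nonneg α, hx.1, hx.2]
  have key := tendsto_lintegral_of_dominated_convergence' (μ := volume.restrict (Ioc 0 R))
    (F := fun n x => ENNReal.ofReal ((v n x - g x) ^ 2 * Real.exp (α * x))) (f := fun _ => 0)
    (fun _ => ENNReal.ofReal ((2 * M) ^ 2 * Real.exp (|α| * R))) (fun n => by fun_prop)
    (fun n => ae_restrict_of_forall_mem measurableSet_Ioc (hbound n))
    (by simp [Real.volume_Ioc, ENNReal.mul_eq_top])
    (ae_restrict_of_forall_mem measurableSet_Ioc fun x hx => by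
      simpa using ENNReal.tendsto_ofReal
        ((((hlim x hx).sub_const (g x)).pow 2).mul_const (Real.exp (α * x))))
  simpa using key

theorem tendsto_weightedEnergy_sub_of_tendsto {α β : ℝ} (hαβ : α < β) {v : ℕ → ℝ → ℝ}
    {g : ℝ → ℝ} {B : ℝ≥0∞} (hB : B ≠ ∞)
    (hv : ∀ n, AEMeasurable (v n) (volume.restrict (Ioi 0)))
    (hE : ∀ n, weightedEnergy β (v n) ≤ B) (hM : ∀ R, ∃ M, ∀ n, ∀ x ∈ Ioc 0 R, |v n x| ≤ M)
    (hlim : ∀ x ∈ Ioi 0, Tendsto (v · x) atTop (𝓝 (g x))) :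
    Tendsto (fun n => weightedEnergy α (v n - g)) atTop (𝓝 0) := by
  have hgE := weightedEnergy_le_of_tendsto hv hlim hE
  have htail : Tendsto (fun R => ENNReal.ofReal (2 * Real.exp ((α - β) * R)) * (B + B))
      atTop (𝓝 0) := by
    have hexp : Tendsto (fun R => 2 * Real.exp ((α - β) * R)) atTop (𝓝 0) := by
      simpa using (Real.tendsto_exp_atBot.comp
        ((tendsto_const_mul_atBot_of_neg (sub_neg.2 hαβ)).2 tendsto_id)).const_mul 2
    simpa using ENNReal.Tendsto.mul_const (ENNReal.tendsto_ofReal hexp)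
      (.inr (ENNReal.add_ne_top.2 ⟨hB, hB⟩))
  refine ENNReal.tendsto_nhds_zero_of_le_add
    (b := fun R n => ∫⁻ x in Ioc 0 R, ENNReal.ofReal ((v n x - g x) ^ 2 * Real.exp (α * x)))
    (fun R => ?_) htail ?_
  · obtain ⟨M, hM⟩ := hM R
    exact tendsto_lintegral_Ioc_sub_sq (fun n => (hv n).mono_measure
      (Measure.restrict_mono Ioc_subset_Ioi_self le_rfl)) hM fun x hx => hlim x hx.1
  · filter_upwards [eventually_ge_atTop 0] with R hR n
    rw [weightedEnergy, ← Ioc_union_Ioi_eq_Ioi hR,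
      lintegral_union measurableSet_Ioi (Ioc_disjoint_Ioi le_rfl)]
    exact add_le_add le_rfl
      ((lintegral_Ioi_sub_sq_le hαβ.le hR (hv n)).trans (by gcongr; exact hE n))

/-- For `α < β` and `k ≥ 0`, the weighted Sobolev space `H^{k+1}_β(ℝ₊)`
(weight `e^{βx}`) is compactly embedded in `H^k_α(ℝ₊)` (weight `e^{αx}`): every sequence
bounded in the `H^{k+1}_β`-norm has a subsequence converging in the `H^k_α`-norm. -/
theorem weighted_sobolev_compact_embedding
    (α β : ℝ) (hαβ : α < β) (k : ℕ)
    (f : ℕ → ℝ → ℝ)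
    (hf : ∀ n, ContDiffOn ℝ (k + 1) (f n) (Ioi (0 : ℝ)))
    (C : ℝ)
    (hbdd : ∀ n,
      ∑ j ∈ Finset.range (k + 2),
        ∫⁻ x in Ioi (0 : ℝ),
          ENNReal.ofReal ((iteratedDerivWithin j (f n) (Ioi (0 : ℝ)) x) ^ 2 *
            Real.exp (β * x))
        ≤ ENNReal.ofReal C) :
    ∃ φ : ℕ → ℕ, StrictMono φ ∧ ∃ g : ℝ → ℝ, ContDiffOn ℝ k g (Ioi (0 : ℝ)) ∧
      Tendsto
        (fun n => ∑ j ∈ Finset.range (k + 1),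
          ∫⁻ x in Ioi (0 : ℝ),
            ENNReal.ofReal
              ((iteratedDerivWithin j (f (φ n)) (Ioi (0 : ℝ)) x -
                iteratedDerivWithin j g (Ioi (0 : ℝ)) x) ^ 2 * Real.exp (α * x)))
        atTop (𝓝 0) := by
  have hE : ∀ n, ∀ j ≤ k + 1, weightedEnergy β (iteratedDerivWithin j (f n) (Ioi 0))
      ≤ ENNReal.ofReal (max C 0) := fun n j hj =>
    calc _ ≤ ∑ i ∈ Finset.range (k + 2),
            weightedEnergy β (iteratedDerivWithin i (f n) (Ioi 0)) :=
          Finset.single_le_sum (fun _ _ => zero_le) (Finset.mem_range.2 (by omega))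
      _ ≤ ENNReal.ofReal (max C 0) :=
          (hbdd n).trans (ENNReal.ofReal_le_ofReal (le_max_left _ _))
  obtain ⟨φ, hφ, g, hg, hconv⟩ :=
    exists_subseq_tendstoLocallyUniformlyOn_iteratedDerivWithin (le_max_right C 0) hf hE
  refine ⟨φ, hφ, g, hg, ?_⟩
  have hsum := tendsto_finsetSum (Finset.range (k + 1)) fun j hj =>
    have hj : j ≤ k := Nat.lt_succ_iff.1 (Finset.mem_range.1 hj)
    tendsto_weightedEnergy_sub_of_tendsto hαβ ENNReal.ofReal_ne_top
      (fun n => ((hf (φ n)).continuousOn_iteratedDerivWithin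
        (by exact_mod_cast hj.trans k.le_succ) (uniqueDiffOn_Ioi 0)).aemeasurable measurableSet_Ioi)
      (fun n => hE (φ n) j (by omega))
      (fun R => (exists_bound_iteratedDerivWithin_of_weightedEnergy_le (le_max_right C 0) hf hE
        hj R).imp fun _ hM n => hM (φ n))
      (fun x hx => (hconv j hj).tendsto_at hx)
  rw [Finset.sum_const_zero] at hsum
  exact hsum
end
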